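/- arXiv:1702.00912 — 10 statements merged into one kernel-verified Lean document; each statement's English description precedes it below -/
import Mathlib

section
/- Let X be a finite collection of finite sets, and let p = log_3(27/4). Then the number of triples (A₁, A₂, A) ∈ X × X × X such that A is the disjoint union of A₁ and A₂ is at most |X|^(3/p). -/
/-
Induction on the ground set: splitting each family according to whether its members contain a
fixed point `x`, a triple `(A, B, C)` has `x ∉ C`, `x ∈ A` or `x ∈ B`, so the bound
`#triples X₁ X₂ X₃ ≤ (#X₁ #X₂ #X₃)^T`, `T = 1/p`, propagates as soon as
`(a₁a₂a₃)^T + (b₁a₂b₃)^T + (a₁b₂b₃)^T ≤ ((a₁+b₁)(a₂+b₂)(a₃+b₃))^T`.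
Hölder's inequality in the third coordinate, with exponents `1/T` and `S + 1 = 1/(1-T)`, reduces
this to `M x y ≤ 1` on the unit square. The maximum of `M` lies on the boundary (direct check), on
the diagonal (one-variable calculus around the minimum of `Ω` at `2/3`), or at an off-diagonal
critical point; there the critical equations force `x^S (1-x) = y^S (1-y)`, which turns the value
of `M` into a one-parameter inequality that follows from concavity of `u ↦ log (ρ^u - 1)`.
-/

open Real

namespace DisjointUnionTriples

noncomputable section

/-- `S` is chosen so that `(9/4)^S = 3`; then `T = S/(S+1) = log 3 / log (27/4)` is the
exponent `1/p` of the theorem and `S + 1 = 1/(1-T)` is the Hölder exponent conjugate to `1/T`. -/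
def S : ℝ := log 3 / log (9 / 4)

def T : ℝ := S / (S + 1)

lemma one_lt_S : 1 < S := by
  rw [S, one_lt_div (log_pos (by norm_num))]
  exact log_lt_log (by norm_num) (by norm_num)

lemma S_pos : 0 < S := one_pos.trans one_lt_S

lemma T_pos : 0 < T := div_pos S_pos (by linarith [S_pos])

lemma T_lt_one : T < 1 := (div_lt_one (by linarith [S_pos])).2 (lt_add_one S)

lemma T_mul : T * (S + 1) = S := div_mul_cancel₀ S (by linarith [S_pos])

lemma one_sub_T_inv : (1 - T)⁻¹ = S + 1 := by
  rw [T, one_sub_div (by linarith [S_pos]), add_sub_cancel_left, inv_div, div_one]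

lemma T_eq : T = log 3 / log (27 / 4) := by
  have h : log (27 / 4) = log 3 + log (9 / 4) := by
    rw [← log_mul (by norm_num) (by norm_num)]; norm_num
  have h₀ : 0 < log (9 / 4) := log_pos (by norm_num)
  have h₁ : 0 < log 3 := log_pos (by norm_num)
  rw [T, S, h]
  field_simp

lemma two_thirds_rpow : (2 / 3 : ℝ) ^ (2 * S) = 1 / 3 := by
  have h : (9 / 4 : ℝ) ^ S = 3 := by
    rw [rpow_def_of_pos (by norm_num), S,
      mul_div_cancel₀ _ (log_pos (by norm_num : (1 : ℝ) < 9 / 4)).ne',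
      exp_log (by norm_num)]
  rw [rpow_mul (by norm_num), show (2 / 3 : ℝ) ^ (2 : ℝ) = (9 / 4)⁻¹ by norm_num,
    inv_rpow (by norm_num), h, one_div]

lemma S_mul_one_sub_T : S * (1 - T) = T := by
  rw [← inv_inv (1 - T), one_sub_T_inv, T, div_eq_mul_inv]

lemma rpow_T_rpow {x : ℝ} (hx : 0 ≤ x) : (x ^ T) ^ (S + 1) = x ^ S := by
  rw [← rpow_mul hx, T_mul]

lemma rpow_T_div_rpow {x y : ℝ} (hx : 0 ≤ x) (hy : 0 < y) :
    ((x * y) ^ T / y) ^ (S + 1) = x ^ S / y := by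
  rw [div_rpow (rpow_nonneg (mul_nonneg hx hy.le) _) hy.le, rpow_T_rpow (mul_nonneg hx hy.le),
    mul_rpow hx hy.le, rpow_add_one hy.ne']
  field_simp

lemma rpow_two_mul_S_lt_one {r : ℝ} (hr₀ : 0 ≤ r) (hr₁ : r < 1) : r ^ (2 * S) < 1 :=
  rpow_lt_one hr₀ hr₁ (by linarith [S_pos])

lemma rpow_mul_add_rpow_mul_le {t x y X Y : ℝ} (ht₀ : 0 < t) (ht₁ : t < 1) (hx : 0 ≤ x)
    (hy : 0 ≤ y) (hX : 0 ≤ X) (hY : 0 ≤ Y) :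
    x ^ t * X + y ^ t * Y ≤ (x + y) ^ t * (X ^ (1 - t)⁻¹ + Y ^ (1 - t)⁻¹) ^ (1 - t) := by
  have h := inner_le_Lp_mul_Lq_of_nonneg Finset.univ (f := ![x ^ t, y ^ t]) (g := ![X, Y])
    (Real.HolderConjugate.inv_one_sub_inv ht₀ ht₁)
    (by simp [Fin.forall_fin_two, rpow_nonneg, hx, hy])
    (by simp [Fin.forall_fin_two, hX, hY])
  simpa [Fin.sum_univ_two, ← rpow_mul hx, ← rpow_mul hy, ht₀.ne'] using h

lemma hasDerivAt_log_rpow_sub_one {ρ x : ℝ} (hρ : 1 < ρ) (hx : 0 < x) :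
    HasDerivAt (fun y => log (ρ ^ y - 1)) (log ρ + log ρ / (ρ ^ x - 1)) x := by
  have hpos : 0 < ρ ^ x - 1 := sub_pos.2 (one_lt_rpow hρ hx)
  refine (((hasStrictDerivAt_const_rpow (by linarith) x).hasDerivAt.sub_const 1).log
    hpos.ne').congr_deriv ?_
  field_simp
  ring

lemma concaveOn_log_rpow_sub_one {ρ : ℝ} (hρ : 1 < ρ) :
    ConcaveOn ℝ (Set.Ioi 0) (fun x : ℝ => log (ρ ^ x - 1)) := by
  refine AntitoneOn.concaveOn_of_deriv (convex_Ioi 0)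
    (fun x hx => (hasDerivAt_log_rpow_sub_one hρ hx).continuousAt.continuousWithinAt) ?_ ?_ <;>
    rw [interior_Ioi]
  · exact fun x hx => (hasDerivAt_log_rpow_sub_one hρ hx).differentiableAt.differentiableWithinAt
  · intro x hx y hy hxy
    rw [(hasDerivAt_log_rpow_sub_one hρ hx).deriv, (hasDerivAt_log_rpow_sub_one hρ hy).deriv]
    have hpos := sub_pos.2 (one_lt_rpow hρ hx)
    gcongr
    · exact log_nonneg hρ.le
    · exact hρ.le

lemma sq_sub_one_mul_rpow_le {ρ c : ℝ} (hρ : 1 < ρ) (hc₀ : 0 < c) (hc₁ : c ≤ 1) :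
    (ρ ^ 2 - 1) * (ρ ^ c - 1) ^ (1 - c) ≤ (ρ ^ (c + 1) - 1) ^ (2 - c) := by
  have hpos : ∀ x : ℝ, 0 < x → 0 < ρ ^ x - 1 := fun x hx => sub_pos.2 (one_lt_rpow hρ hx)
  have h2c : 0 < 2 - c := by linarith
  have hjensen := (concaveOn_log_rpow_sub_one hρ).2 (Set.mem_Ioi.2 hc₀)
    (Set.mem_Ioi.2 two_pos) (div_nonneg (by linarith : 0 ≤ 1 - c) (by linarith : 0 ≤ 2 - c))
    (div_nonneg zero_le_one (by linarith : 0 ≤ 2 - c)) (by field_simp; ring)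
  have hcomb : (1 - c) / (2 - c) * c + 1 / (2 - c) * 2 = c + 1 := by field_simp; ring
  simp only [smul_eq_mul, hcomb] at hjensen
  rw [div_mul_eq_mul_div, one_div_mul_eq_div, ← add_div, div_le_iff₀ h2c] at hjensen
  have hlog : log ((ρ ^ 2 - 1) * (ρ ^ c - 1) ^ (1 - c)) ≤ log ((ρ ^ (c + 1) - 1) ^ (2 - c)) := by
    rw [log_mul (by nlinarith) (rpow_pos_of_pos (hpos c hc₀) _).ne', log_rpow (hpos c hc₀),
      log_rpow (hpos _ (by linarith)), ← rpow_natCast, Nat.cast_ofNat]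
    linarith
  exact (log_le_log_iff (mul_pos (by nlinarith) (rpow_pos_of_pos (hpos c hc₀) _))
    (rpow_pos_of_pos (hpos _ (by linarith)) _)).1 hlog

def M (a b : ℝ) : ℝ := (a * b) ^ S + (((1 - a) * b) ^ T + (a * (1 - b)) ^ T) ^ (S + 1)

lemma M_comm (a b : ℝ) : M a b = M b a := by
  rw [M, M, mul_comm a b, mul_comm (1 - a) b, mul_comm a (1 - b), add_comm (((1 - b) * a) ^ T)]

lemma M_zero_left_le_one {b : ℝ} (hb₀ : 0 ≤ b) (hb₁ : b ≤ 1) : M 0 b ≤ 1 := by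
  simpa [M, zero_rpow S_pos.ne', zero_rpow T_pos.ne', rpow_T_rpow hb₀] using
    rpow_le_one hb₀ hb₁ S_pos.le

lemma M_one_left_le_one {b : ℝ} (hb₀ : 0 ≤ b) (hb₁ : b ≤ 1) : M 1 b ≤ 1 := by
  have h := add_rpow_le_rpow_add hb₀ (sub_nonneg.2 hb₁) one_lt_S.le
  simpa [M, zero_rpow T_pos.ne', rpow_T_rpow (sub_nonneg.2 hb₁)] using h

lemma strictConcaveOn_two_mul_sub_one_sub_rpow :
    StrictConcaveOn ℝ (Set.Ici 0) (fun r : ℝ => 2 * r - 1 - r ^ (2 * S)) := by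
  have hlin : ConcaveOn ℝ (Set.Ici 0) (fun r : ℝ => 2 * r - 1) :=
    ⟨convex_Ici 0, fun x _ y _ a b _ _ hab => by
      simp only [smul_eq_mul]; linear_combination (-1 : ℝ) * hab⟩
  exact hlin.sub_strictConvexOn (strictConvexOn_rpow (by linarith [one_lt_S]))

lemma two_mul_sub_one_sub_rpow_neg {r : ℝ} (hr₀ : 0 < r) (hr₁ : r < 2 / 3) :
    2 * r - 1 - r ^ (2 * S) < 0 := by
  have h := strictConcaveOn_two_mul_sub_one_sub_rpow.lt_on_openSegment (Set.mem_Ici.2 hr₀.le)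
    (Set.mem_Ici.2 zero_le_one) (by linarith) (z := 2 / 3)
    (by rw [openSegment_eq_Ioo (by linarith)]; constructor <;> norm_num [hr₁])
  simp only [two_thirds_rpow, one_rpow] at h
  norm_num at h
  linarith

lemma two_mul_sub_one_sub_rpow_pos {r : ℝ} (hr₀ : 2 / 3 < r) (hr₁ : r < 1) :
    0 < 2 * r - 1 - r ^ (2 * S) := by
  have h := strictConcaveOn_two_mul_sub_one_sub_rpow.lt_on_openSegment
    (Set.mem_Ici.2 (by norm_num : (0 : ℝ) ≤ 2 / 3)) (Set.mem_Ici.2 zero_le_one) (by norm_num)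
    (z := r) (by rw [openSegment_eq_Ioo (by norm_num)]; exact ⟨hr₀, hr₁⟩)
  norm_num [two_thirds_rpow] at h
  linarith

/-- `M a a ≤ 1` says `Ω a ≥ (S + 1) log 2`; the minimum of `Ω` on `(0, 1)` is attained at `2/3`. -/
def Ω (r : ℝ) : ℝ := log (1 - r ^ (2 * S)) - S * log (r * (1 - r))

lemma hasDerivAt_Ω {r : ℝ} (hr₀ : 0 < r) (hr₁ : r < 1) :
    HasDerivAt Ω (S * (2 * r - 1 - r ^ (2 * S)) / ((1 - r ^ (2 * S)) * (r * (1 - r)))) r := by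
  have h₁ : 1 - r ^ (2 * S) ≠ 0 := (sub_pos.2 (rpow_two_mul_S_lt_one hr₀.le hr₁)).ne'
  have h₂ : 1 - r ≠ 0 := (sub_pos.2 hr₁).ne'
  have hpow := ((hasDerivAt_rpow_const (p := 2 * S) (Or.inl hr₀.ne')).const_sub 1).log h₁
  have hprod := (((hasDerivAt_id r).mul ((hasDerivAt_id r).const_sub 1)).log
    (mul_ne_zero hr₀.ne' h₂)).const_mul S
  refine (hpow.sub hprod).congr_deriv ?_
  simp only [Pi.mul_apply, id]
  rw [rpow_sub_one hr₀.ne']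
  field_simp
  ring

lemma Ω_two_thirds : Ω (2 / 3) = (S + 1) * log 2 := by
  have hS : S * (2 * log 3 - 2 * log 2) = log 3 := by
    rw [S, div_mul_eq_mul_div, div_eq_iff (log_pos (by norm_num)).ne']
    rw [show (9 / 4 : ℝ) = 3 ^ 2 / 2 ^ 2 by norm_num, log_div (by norm_num) (by norm_num),
      log_pow, log_pow]
    push_cast; ring
  rw [Ω, two_thirds_rpow, show (1 : ℝ) - 1 / 3 = 2 / 3 by norm_num,
    show (2 / 3 : ℝ) * (1 - 2 / 3) = 2 / 3 ^ 2 by norm_num, log_div (by norm_num) (by norm_num),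
    log_div (by norm_num) (by norm_num), log_pow]
  push_cast
  linear_combination hS

lemma Ω_two_thirds_le {r : ℝ} (hr₀ : 0 < r) (hr₁ : r < 1) : Ω (2 / 3) ≤ Ω r := by
  have hcont : ContinuousOn Ω (Set.Ioo 0 1) := fun x hx =>
    (hasDerivAt_Ω hx.1 hx.2).continuousAt.continuousWithinAt
  have hdiff : DifferentiableOn ℝ Ω (Set.Ioo 0 1) := fun x hx =>
    (hasDerivAt_Ω hx.1 hx.2).differentiableAt.differentiableWithinAt
  have hden : ∀ x ∈ Set.Ioo (0 : ℝ) 1, 0 < (1 - x ^ (2 * S)) * (x * (1 - x)) := fun x hx =>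
    mul_pos (sub_pos.2 (rpow_two_mul_S_lt_one hx.1.le hx.2)) (mul_pos hx.1 (sub_pos.2 hx.2))
  rcases le_total r (2 / 3) with h | h
  · have hsub : Set.Ioc (0 : ℝ) (2 / 3) ⊆ Set.Ioo 0 1 := Set.Ioc_subset_Ioo_right (by norm_num)
    refine antitoneOn_of_deriv_nonpos (convex_Ioc 0 (2 / 3)) (hcont.mono hsub)
      (hdiff.mono (interior_subset.trans hsub)) ?_ ⟨hr₀, h⟩ ⟨by norm_num, le_rfl⟩ h
    rw [interior_Ioc]
    intro x hx
    have hx' := hsub (Set.Ioo_subset_Ioc_self hx)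
    rw [(hasDerivAt_Ω hx'.1 hx'.2).deriv]
    exact (div_neg_of_neg_of_pos (mul_neg_of_pos_of_neg S_pos
      (two_mul_sub_one_sub_rpow_neg hx.1 hx.2)) (hden x hx')).le
  · have hsub : Set.Ico (2 / 3 : ℝ) 1 ⊆ Set.Ioo 0 1 := Set.Ico_subset_Ioo_left (by norm_num)
    refine monotoneOn_of_deriv_nonneg (convex_Ico (2 / 3) 1) (hcont.mono hsub)
      (hdiff.mono (interior_subset.trans hsub)) ?_ ⟨le_rfl, by norm_num⟩ ⟨h, hr₁⟩ h
    rw [interior_Ico]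
    intro x hx
    have hx' := hsub (Set.Ioo_subset_Ico_self hx)
    rw [(hasDerivAt_Ω hx'.1 hx'.2).deriv]
    exact (div_pos (mul_pos S_pos (two_mul_sub_one_sub_rpow_pos hx.1 hx.2)) (hden x hx')).le

lemma M_self_le_one {a : ℝ} (ha₀ : 0 < a) (ha₁ : a < 1) : M a a ≤ 1 := by
  have hpos : 0 < a * (1 - a) := mul_pos ha₀ (sub_pos.2 ha₁)
  have hlt : a ^ (2 * S) < 1 := rpow_two_mul_S_lt_one ha₀.le ha₁
  have hdiag : M a a = a ^ (2 * S) + 2 ^ (S + 1) * (a * (1 - a)) ^ S := by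
    rw [M, mul_comm (1 - a) a, ← two_mul, mul_rpow zero_le_two (rpow_nonneg hpos.le T),
      rpow_T_rpow hpos.le, mul_rpow ha₀.le ha₀.le, ← rpow_add ha₀, two_mul]
  have hΩ := Ω_two_thirds_le ha₀ ha₁
  rw [Ω_two_thirds, Ω] at hΩ
  have hlog : log (2 ^ (S + 1) * (a * (1 - a)) ^ S) ≤ log (1 - a ^ (2 * S)) := by
    rw [log_mul (by positivity) (by positivity), log_rpow two_pos, log_rpow hpos]
    linarith
  rw [hdiag]
  linarith [(log_le_log_iff (by positivity) (sub_pos.2 hlt)).1 hlog]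

lemma div_eq_rpow_of_rpow_S_mul_eq {a b : ℝ} (ha₀ : 0 < a) (hb₀ : 0 < b) (ha₁ : a < 1)
    (hab : a ^ S * (1 - a) = b ^ S * (1 - b)) : a / b = ((1 - b) / (1 - a)) ^ S⁻¹ := by
  have hdiv : (a / b) ^ S = (1 - b) / (1 - a) := by
    rw [div_rpow ha₀.le hb₀.le, div_eq_div_iff (rpow_pos_of_pos hb₀ S).ne' (sub_pos.2 ha₁).ne']
    linear_combination hab
  rw [← hdiv, ← rpow_mul (div_pos ha₀ hb₀).le, mul_inv_cancel₀ S_pos.ne', rpow_one]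

/-- With `ρ = (1 - b)/(1 - a)` and `c = 1/S`, the constraint gives `a = ρ^c b`, which determines
`a` and `b` as functions of `ρ`; the bound then becomes `sq_sub_one_mul_rpow_le`. -/
lemma rpow_S_le_of_rpow_S_mul_eq {a b : ℝ} (hb₀ : 0 < b) (hba : b < a) (ha₁ : a < 1)
    (hab : a ^ S * (1 - a) = b ^ S * (1 - b)) : (a * (2 - a - b)) ^ S ≤ 1 - b := by
  have ha : a = ((1 - b) / (1 - a)) ^ S⁻¹ * b :=
    (div_eq_iff hb₀.ne').1 (div_eq_rpow_of_rpow_S_mul_eq (hb₀.trans hba) hb₀ ha₁ hab)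
  set c := S⁻¹ with hc
  have hc₀ : 0 < c := inv_pos.2 S_pos
  have hc₁ : c ≤ 1 := inv_le_one_of_one_le₀ one_lt_S.le
  set V := 1 - a with hV
  have hV₀ : 0 < V := sub_pos.2 ha₁
  set ρ := (1 - b) / V with hρ
  have hρ₁ : 1 < ρ := (one_lt_div hV₀).2 (by linarith)
  have h1b : 1 - b = ρ * V := by rw [hρ, div_mul_cancel₀ _ hV₀.ne']
  set E := ρ ^ (c + 1) - 1 with hE
  have hE₀ : 0 < E := sub_pos.2 (one_lt_rpow hρ₁ (by linarith))
  have hρc₁ : ρ ^ (c + 1) = ρ ^ c * ρ := rpow_add_one (by linarith) c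
  have hVE : V * E = ρ ^ c - 1 := by
    rw [hE, hρc₁]; linear_combination (-ρ ^ c) * h1b + ha - hV
  have hbE : b * E = ρ - 1 := by
    rw [hE, hρc₁]; linear_combination (-ρ) * ha + h1b + ρ * hV
  have hkey : b * (1 + ρ) * V ^ (1 - c) ≤ 1 := by
    have h : b * (1 + ρ) * V ^ (1 - c) * E ^ (2 - c) = (ρ ^ 2 - 1) * (ρ ^ c - 1) ^ (1 - c) := by
      rw [show 2 - c = 1 + (1 - c) by ring, rpow_add hE₀, rpow_one, ← hVE,
        mul_rpow hV₀.le hE₀.le]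
      linear_combination (1 + ρ) * V ^ (1 - c) * E ^ (1 - c) * hbE
    have hbound := sq_sub_one_mul_rpow_le hρ₁ hc₀ hc₁
    rw [← h] at hbound
    exact (mul_le_iff_le_one_left (rpow_pos_of_pos hE₀ _)).1 hbound
  have hVsplit : V = V ^ c * V ^ (1 - c) := by
    rw [← rpow_add hV₀, add_sub_cancel, rpow_one]
  have h2ab : a * (2 - a - b) ≤ (1 - b) ^ c := by
    calc a * (2 - a - b) = ρ ^ c * V ^ c * (b * (1 + ρ) * V ^ (1 - c)) := by
          rw [show 2 - a - b = (1 + ρ) * V by linear_combination h1b - hV, ha]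
          linear_combination (ρ ^ c * b * (1 + ρ)) * hVsplit
      _ ≤ ρ ^ c * V ^ c := mul_le_of_le_one_right (by positivity) hkey
      _ = (1 - b) ^ c := by rw [h1b, mul_rpow (by linarith) hV₀.le]
  calc (a * (2 - a - b)) ^ S ≤ ((1 - b) ^ c) ^ S :=
        rpow_le_rpow (mul_nonneg (by linarith) (by linarith)) h2ab S_pos.le
    _ = 1 - b := by rw [← rpow_mul (by linarith), hc, inv_mul_cancel₀ S_pos.ne', rpow_one]

def M₁ (a b : ℝ) : ℝ :=
  S * ((a * b) ^ S / a + (((1 - a) * b) ^ T + (a * (1 - b)) ^ T) ^ S *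
    ((a * (1 - b)) ^ T / a - ((1 - a) * b) ^ T / (1 - a)))

lemma hasDerivAt_M_left {a b : ℝ} (ha₀ : 0 < a) (ha₁ : a < 1) (hb₀ : 0 < b) (hb₁ : b < 1) :
    HasDerivAt (fun x => M x b) (M₁ a b) a := by
  have h1a : 1 - a ≠ 0 := (sub_pos.2 ha₁).ne'
  have h1b : 1 - b ≠ 0 := (sub_pos.2 hb₁).ne'
  have hab : 0 < a * b := mul_pos ha₀ hb₀
  have hv : 0 < (1 - a) * b := mul_pos (sub_pos.2 ha₁) hb₀
  have hu : 0 < a * (1 - b) := mul_pos ha₀ (sub_pos.2 hb₁)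
  have hB : 0 < ((1 - a) * b) ^ T + (a * (1 - b)) ^ T := by positivity
  have hP := ((hasDerivAt_id a).mul_const b).rpow_const (p := S) (Or.inl hab.ne')
  have hV := (((hasDerivAt_id a).const_sub 1).mul_const b).rpow_const (p := T) (Or.inl hv.ne')
  have hU := ((hasDerivAt_id a).mul_const (1 - b)).rpow_const (p := T) (Or.inl hu.ne')
  refine (hP.add ((hV.add hU).rpow_const (p := S + 1) (Or.inl hB.ne'))).congr_deriv ?_
  simp only [id, Pi.add_apply, add_sub_cancel_right, rpow_sub_one hab.ne', rpow_sub_one hv.ne',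
    rpow_sub_one hu.ne']
  rw [M₁]
  field_simp
  linear_combination ((1 - a) * (a * (1 - b)) ^ T - a * (b * (1 - a)) ^ T) *
    ((b * (1 - a)) ^ T + (a * (1 - b)) ^ T) ^ S * T_mul

lemma div_eq_div_of_M₁_eq_zero {a b : ℝ} (ha₀ : 0 < a) (ha₁ : a < 1) (hb₀ : 0 < b)
    (hb₁ : b < 1) (h₁ : M₁ a b = 0) (h₂ : M₁ b a = 0) :
    (a * (1 - b)) ^ T / (1 - b) = (b * (1 - a)) ^ T / (1 - a) := by
  have h1a : 1 - a ≠ 0 := (sub_pos.2 ha₁).ne'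
  have h1b : 1 - b ≠ 0 := (sub_pos.2 hb₁).ne'
  rw [M₁, mul_eq_zero, or_iff_right S_pos.ne'] at h₁ h₂
  rw [mul_comm (1 - a) b] at h₁
  rw [mul_comm b a, mul_comm (1 - b) a, add_comm ((a * (1 - b)) ^ T)] at h₂
  set u := (a * (1 - b)) ^ T
  set v := (b * (1 - a)) ^ T
  have hB : 0 < (v + u) ^ S := by positivity
  have hdiff : (v + u) ^ S * (u / (1 - b) - v / (1 - a)) = 0 := by
    calc (v + u) ^ S * (u / (1 - b) - v / (1 - a))
        = a * ((a * b) ^ S / a + (v + u) ^ S * (u / a - v / (1 - a))) -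
          b * ((a * b) ^ S / b + (v + u) ^ S * (v / b - u / (1 - b))) := by
          field_simp; ring
      _ = 0 := by rw [h₁, h₂]; ring
  exact sub_eq_zero.1 ((mul_eq_zero.1 hdiff).resolve_left hB.ne')

lemma rpow_S_mul_eq_of_M₁_eq_zero {a b : ℝ} (ha₀ : 0 < a) (ha₁ : a < 1) (hb₀ : 0 < b)
    (hb₁ : b < 1) (h₁ : M₁ a b = 0) (h₂ : M₁ b a = 0) : a ^ S * (1 - a) = b ^ S * (1 - b) := by
  have h := congrArg (· ^ (S + 1)) (div_eq_div_of_M₁_eq_zero ha₀ ha₁ hb₀ hb₁ h₁ h₂)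
  simp only [rpow_T_div_rpow ha₀.le (sub_pos.2 hb₁), rpow_T_div_rpow hb₀.le (sub_pos.2 ha₁)] at h
  rwa [div_eq_div_iff (sub_pos.2 hb₁).ne' (sub_pos.2 ha₁).ne'] at h

lemma M_eq_of_M₁_eq_zero {a b : ℝ} (ha₀ : 0 < a) (ha₁ : a < 1) (hb₀ : 0 < b)
    (hb₁ : b < 1) (h₁ : M₁ a b = 0) (h₂ : M₁ b a = 0) :
    M a b = (a * (2 - a - b)) ^ S / (1 - b) := by
  have h1a : 1 - a ≠ 0 := (sub_pos.2 ha₁).ne'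
  have h1b : 1 - b ≠ 0 := (sub_pos.2 hb₁).ne'
  have hk := div_eq_div_of_M₁_eq_zero ha₀ ha₁ hb₀ hb₁ h₁ h₂
  have hkS := rpow_T_div_rpow ha₀.le (sub_pos.2 hb₁)
  rw [M₁, mul_eq_zero, or_iff_right S_pos.ne', mul_comm (1 - a) b] at h₁
  rw [M, mul_comm (1 - a) b]
  set k := (a * (1 - b)) ^ T / (1 - b)
  have hk₀ : 0 < k := div_pos (rpow_pos_of_pos (mul_pos ha₀ (sub_pos.2 hb₁)) _) (sub_pos.2 hb₁)
  have hu : (a * (1 - b)) ^ T = (1 - b) * k := by simp only [k]; field_simp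
  have hv : (b * (1 - a)) ^ T = (1 - a) * k := by rw [hk]; field_simp
  have hB : (b * (1 - a)) ^ T + (a * (1 - b)) ^ T = (2 - a - b) * k := by rw [hu, hv]; ring
  have h2ab : 0 < 2 - a - b := by linarith
  rw [hB, hu, hv] at h₁
  rw [hB]
  have hP : (a * b) ^ S = ((2 - a - b) * k) ^ S * k * (a + b - 1) := by
    field_simp at h₁
    linear_combination h₁
  calc (a * b) ^ S + ((2 - a - b) * k) ^ (S + 1)
      = (2 - a - b) ^ S * k ^ (S + 1) := by
        rw [hP, rpow_add_one (mul_pos h2ab hk₀).ne', mul_rpow h2ab.le hk₀.le,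
          rpow_add_one hk₀.ne']
        ring
    _ = (a * (2 - a - b)) ^ S / (1 - b) := by
        rw [hkS, mul_rpow ha₀.le h2ab.le]
        ring

lemma M_le_one_of_M₁_eq_zero {a b : ℝ} (ha₀ : 0 < a) (ha₁ : a < 1) (hb₀ : 0 < b)
    (hb₁ : b < 1) (hba : b < a) (h₁ : M₁ a b = 0) (h₂ : M₁ b a = 0) : M a b ≤ 1 := by
  rw [M_eq_of_M₁_eq_zero ha₀ ha₁ hb₀ hb₁ h₁ h₂, div_le_one (sub_pos.2 hb₁)]
  exact rpow_S_le_of_rpow_S_mul_eq hb₀ hba ha₁ (rpow_S_mul_eq_of_M₁_eq_zero ha₀ ha₁ hb₀ hb₁ h₁ h₂)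

lemma continuous_M : Continuous (fun p : ℝ × ℝ => M p.1 p.2) :=
  ((continuous_fst.mul continuous_snd).rpow_const fun _ => Or.inr S_pos.le).add
    ((((continuous_const.sub continuous_fst).mul continuous_snd).rpow_const
      fun _ => Or.inr T_pos.le).add
      ((continuous_fst.mul (continuous_const.sub continuous_snd)).rpow_const
        fun _ => Or.inr T_pos.le) |>.rpow_const fun _ => Or.inr (by linarith [S_pos]))

lemma M_le_one {a b : ℝ} (ha₀ : 0 ≤ a) (ha₁ : a ≤ 1) (hb₀ : 0 ≤ b) (hb₁ : b ≤ 1) :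
    M a b ≤ 1 := by
  obtain ⟨⟨a', b'⟩, ⟨⟨ha₀', hb₀'⟩, ⟨ha₁', hb₁'⟩⟩, hmax⟩ :=
    isCompact_Icc.exists_isMaxOn (Set.nonempty_Icc.2 (zero_le_one : ((0 : ℝ), (0 : ℝ)) ≤ (1, 1)))
      continuous_M.continuousOn
  refine (hmax (show (a, b) ∈ Set.Icc (0, 0) (1, 1) from ⟨⟨ha₀, hb₀⟩, ⟨ha₁, hb₁⟩⟩)).trans ?_
  dsimp only at ha₀' hb₀' ha₁' hb₁' ⊢
  rcases ha₀'.eq_or_lt with rfl | ha₀'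
  · exact M_zero_left_le_one hb₀' hb₁'
  rcases ha₁'.eq_or_lt with rfl | ha₁'
  · exact M_one_left_le_one hb₀' hb₁'
  rcases hb₀'.eq_or_lt with rfl | hb₀'
  · exact M_comm _ _ ▸ M_zero_left_le_one ha₀'.le ha₁'.le
  rcases hb₁'.eq_or_lt with rfl | hb₁'
  · exact M_comm _ _ ▸ M_one_left_le_one ha₀'.le ha₁'.le
  have h₁ : M₁ a' b' = 0 := by
    refine IsLocalMax.hasDerivAt_eq_zero ?_ (hasDerivAt_M_left ha₀' ha₁' hb₀' hb₁')
    filter_upwards [Ioo_mem_nhds ha₀' ha₁'] with x hx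
    exact hmax (show (x, b') ∈ Set.Icc (0, 0) (1, 1) from ⟨⟨hx.1.le, hb₀'.le⟩, ⟨hx.2.le, hb₁'.le⟩⟩)
  have h₂ : M₁ b' a' = 0 := by
    refine IsLocalMax.hasDerivAt_eq_zero ?_ (hasDerivAt_M_left hb₀' hb₁' ha₀' ha₁')
    filter_upwards [Ioo_mem_nhds hb₀' hb₁'] with y hy
    rw [M_comm y, M_comm b']
    exact hmax (show (a', y) ∈ Set.Icc (0, 0) (1, 1) from ⟨⟨ha₀'.le, hy.1.le⟩, ⟨ha₁'.le, hy.2.le⟩⟩)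
  rcases lt_trichotomy b' a' with h | rfl | h
  · exact M_le_one_of_M₁_eq_zero ha₀' ha₁' hb₀' hb₁' h h₁ h₂
  · exact M_self_le_one ha₀' ha₁'
  · exact M_comm a' b' ▸ M_le_one_of_M₁_eq_zero hb₀' hb₁' ha₀' ha₁' h h₂ h₁

lemma rpow_S_add_rpow_T_add_rpow_T_le {a₁ b₁ a₂ b₂ : ℝ} (ha₁ : 0 ≤ a₁) (hb₁ : 0 ≤ b₁)
    (ha₂ : 0 ≤ a₂) (hb₂ : 0 ≤ b₂) :
    (a₁ * a₂) ^ S + ((b₁ * a₂) ^ T + (a₁ * b₂) ^ T) ^ (S + 1) ≤ ((a₁ + b₁) * (a₂ + b₂)) ^ S := by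
  have hS1 : S + 1 ≠ 0 := by linarith [S_pos]
  rcases (add_nonneg ha₁ hb₁).eq_or_lt with h₁ | h₁
  · obtain ⟨rfl, rfl⟩ : a₁ = 0 ∧ b₁ = 0 := ⟨by linarith, by linarith⟩
    simp [zero_rpow S_pos.ne', zero_rpow T_pos.ne', zero_rpow hS1]
  rcases (add_nonneg ha₂ hb₂).eq_or_lt with h₂ | h₂
  · obtain ⟨rfl, rfl⟩ : a₂ = 0 ∧ b₂ = 0 := ⟨by linarith, by linarith⟩
    simp [zero_rpow S_pos.ne', zero_rpow T_pos.ne', zero_rpow hS1]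
  set x := a₁ / (a₁ + b₁)
  set y := a₂ / (a₂ + b₂)
  set σ := (a₁ + b₁) * (a₂ + b₂)
  have hσ : 0 ≤ σ := by positivity
  have e₁ : a₁ * a₂ = σ * (x * y) := by simp only [x, y, σ]; field_simp
  have e₂ : b₁ * a₂ = σ * ((1 - x) * y) := by simp only [x, y, σ]; field_simp; ring
  have e₃ : a₁ * b₂ = σ * (x * (1 - y)) := by simp only [x, y, σ]; field_simp; ring
  have hx₀ : 0 ≤ x := div_nonneg ha₁ h₁.le
  have hy₀ : 0 ≤ y := div_nonneg ha₂ h₂.le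
  have hx₁ : x ≤ 1 := div_le_one_of_le₀ (by linarith) h₁.le
  have hy₁ : y ≤ 1 := div_le_one_of_le₀ (by linarith) h₂.le
  clear_value x y σ
  have hu : 0 ≤ (1 - x) * y := mul_nonneg (by linarith) hy₀
  have hv : 0 ≤ x * (1 - y) := mul_nonneg hx₀ (by linarith)
  calc (a₁ * a₂) ^ S + ((b₁ * a₂) ^ T + (a₁ * b₂) ^ T) ^ (S + 1) = σ ^ S * M x y := by
        rw [e₁, e₂, e₃, M, mul_rpow hσ (mul_nonneg hx₀ hy₀), mul_rpow hσ hu, mul_rpow hσ hv,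
          ← mul_add, mul_rpow (rpow_nonneg hσ T) (by positivity), rpow_T_rpow hσ]
        ring
    _ ≤ σ ^ S := mul_le_of_le_one_right (rpow_nonneg hσ S) (M_le_one hx₀ hx₁ hy₀ hy₁)

lemma rpow_T_add_rpow_T_add_rpow_T_le {a₁ b₁ a₂ b₂ a₃ b₃ : ℝ} (ha₁ : 0 ≤ a₁) (hb₁ : 0 ≤ b₁)
    (ha₂ : 0 ≤ a₂) (hb₂ : 0 ≤ b₂) (ha₃ : 0 ≤ a₃) (hb₃ : 0 ≤ b₃) :
    (a₁ * a₂ * a₃) ^ T + (b₁ * a₂ * b₃) ^ T + (a₁ * b₂ * b₃) ^ T ≤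
      ((a₁ + b₁) * (a₂ + b₂) * (a₃ + b₃)) ^ T := by
  have hHolder := rpow_mul_add_rpow_mul_le T_pos T_lt_one ha₃ hb₃
    (rpow_nonneg (mul_nonneg ha₁ ha₂) T)
    (add_nonneg (rpow_nonneg (mul_nonneg hb₁ ha₂) T) (rpow_nonneg (mul_nonneg ha₁ hb₂) T))
  rw [one_sub_T_inv, rpow_T_rpow (mul_nonneg ha₁ ha₂)] at hHolder
  calc (a₁ * a₂ * a₃) ^ T + (b₁ * a₂ * b₃) ^ T + (a₁ * b₂ * b₃) ^ T
      = a₃ ^ T * (a₁ * a₂) ^ T + b₃ ^ T * ((b₁ * a₂) ^ T + (a₁ * b₂) ^ T) := by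
        rw [mul_rpow (by positivity) ha₃, mul_rpow (by positivity) hb₃,
          mul_rpow (by positivity) hb₃]
        ring
    _ ≤ (a₃ + b₃) ^ T * (((a₁ + b₁) * (a₂ + b₂)) ^ S) ^ (1 - T) := by
        refine hHolder.trans (mul_le_mul_of_nonneg_left ?_ (by positivity))
        exact rpow_le_rpow (by positivity) (rpow_S_add_rpow_T_add_rpow_T_le ha₁ hb₁ ha₂ hb₂)
          (sub_pos.2 T_lt_one).le
    _ = ((a₁ + b₁) * (a₂ + b₂) * (a₃ + b₃)) ^ T := by
        rw [← rpow_mul (by positivity), S_mul_one_sub_T, mul_comm,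
          ← mul_rpow (by positivity) (by positivity)]

end

section Combinatorics

open Finset

variable {α : Type*} [DecidableEq α]

def triples (X₁ X₂ X₃ : Finset (Finset α)) : Finset (Finset α × Finset α × Finset α) :=
  (X₁ ×ˢ X₂ ×ˢ X₃).filter (fun p => Disjoint p.1 p.2.1 ∧ p.1 ∪ p.2.1 = p.2.2)

@[simp]
lemma mem_triples {X₁ X₂ X₃ : Finset (Finset α)} {A B C : Finset α} :
    (A, B, C) ∈ triples X₁ X₂ X₃ ↔ A ∈ X₁ ∧ B ∈ X₂ ∧ C ∈ X₃ ∧ Disjoint A B ∧ A ∪ B = C := by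
  simp [triples, and_assoc]

lemma card_triples_le_sum_subfamilies (x : α) (X₁ X₂ X₃ : Finset (Finset α)) :
    #(triples X₁ X₂ X₃) ≤
      #(triples (X₁.nonMemberSubfamily x) (X₂.nonMemberSubfamily x) (X₃.nonMemberSubfamily x)) +
      #(triples (X₁.memberSubfamily x) (X₂.nonMemberSubfamily x) (X₃.memberSubfamily x)) +
      #(triples (X₁.nonMemberSubfamily x) (X₂.memberSubfamily x) (X₃.memberSubfamily x)) := by
  set insertFst : Finset α × Finset α × Finset α → _ :=
    fun p => (insert x p.1, p.2.1, insert x p.2.2)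
  set insertSnd : Finset α × Finset α × Finset α → _ :=
    fun p => (p.1, insert x p.2.1, insert x p.2.2)
  calc #(triples X₁ X₂ X₃)
      ≤ #(triples (X₁.nonMemberSubfamily x) (X₂.nonMemberSubfamily x) (X₃.nonMemberSubfamily x) ∪
          (triples (X₁.memberSubfamily x) (X₂.nonMemberSubfamily x) (X₃.memberSubfamily x)).image
            insertFst ∪
          (triples (X₁.nonMemberSubfamily x) (X₂.memberSubfamily x) (X₃.memberSubfamily x)).image
            insertSnd) := by
        refine card_le_card fun ⟨A, B, C⟩ h => ?_
        simp only [mem_triples, mem_union, mem_image, mem_nonMemberSubfamily, mem_memberSubfamily,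
          Prod.exists, Prod.mk.injEq, insertFst, insertSnd] at h ⊢
        obtain ⟨hA, hB, hC, hAB, rfl⟩ := h
        by_cases hxA : x ∈ A
        · have hxB : x ∉ B := disjoint_left.1 hAB hxA
          refine Or.inl (Or.inr ⟨A.erase x, B, (A ∪ B).erase x, ?_⟩)
          simp [insert_erase hxA, ← insert_union, hA, hB, hC, hxB, erase_union_distrib,
            hAB.mono_left (erase_subset x A)]
        by_cases hxB : x ∈ B
        · refine Or.inr ⟨A, B.erase x, (A ∪ B).erase x, ?_⟩
          simp [insert_erase hxB, ← union_insert, hA, hB, hC, hxA, erase_union_distrib,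
            hAB.mono_right (erase_subset x B)]
        · exact Or.inl (Or.inl ⟨⟨hA, hxA⟩, ⟨hB, hxB⟩, ⟨hC, by simp [hxA, hxB]⟩, hAB, rfl⟩)
    _ ≤ _ := by
        grw [card_union_le, card_union_le, card_image_le, card_image_le]

lemma forall_mem_nonMemberSubfamily_subset {x : α} {U : Finset α} {X : Finset (Finset α)}
    (hX : ∀ A ∈ X, A ⊆ insert x U) : ∀ A ∈ X.nonMemberSubfamily x, A ⊆ U := fun A hA => by
  rw [mem_nonMemberSubfamily] at hA
  exact (subset_insert_iff_of_notMem hA.2).1 (hX A hA.1)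

lemma forall_mem_memberSubfamily_subset {x : α} {U : Finset α} {X : Finset (Finset α)}
    (hX : ∀ A ∈ X, A ⊆ insert x U) : ∀ A ∈ X.memberSubfamily x, A ⊆ U := fun A hA => by
  rw [mem_memberSubfamily] at hA
  exact (insert_subset_insert_iff hA.2).1 (hX _ hA.1)

lemma card_triples_le_of_forall_subset_empty {X₁ X₂ X₃ : Finset (Finset α)}
    (h₁ : ∀ A ∈ X₁, A ⊆ ∅) (h₂ : ∀ A ∈ X₂, A ⊆ ∅) (h₃ : ∀ A ∈ X₃, A ⊆ ∅) :
    (#(triples X₁ X₂ X₃) : ℝ) ≤ ((#X₁ : ℝ) * #X₂ * #X₃) ^ T := by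
  have hcard : ∀ X : Finset (Finset α), (∀ A ∈ X, A ⊆ ∅) → (#X : ℝ) ≤ 1 := fun X hX => by
    exact_mod_cast card_le_one.2 fun A hA B hB => by
      rw [subset_empty.1 (hX A hA), subset_empty.1 (hX B hB)]
  have hN : #(triples X₁ X₂ X₃) ≤ #X₁ * #X₂ * #X₃ := by
    rw [mul_assoc, ← card_product, ← card_product]
    exact card_filter_le _ _
  refine (Nat.cast_le.2 hN).trans ?_
  push_cast
  refine self_le_rpow_of_le_one (by positivity) ?_ T_lt_one.le
  exact mul_le_one₀ (mul_le_one₀ (hcard X₁ h₁) (by positivity) (hcard X₂ h₂)) (by positivity)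
    (hcard X₃ h₃)

lemma card_triples_le_rpow (U : Finset α) {X₁ X₂ X₃ : Finset (Finset α)}
    (h₁ : ∀ A ∈ X₁, A ⊆ U) (h₂ : ∀ A ∈ X₂, A ⊆ U) (h₃ : ∀ A ∈ X₃, A ⊆ U) :
    (#(triples X₁ X₂ X₃) : ℝ) ≤ ((#X₁ : ℝ) * #X₂ * #X₃) ^ T := by
  induction U using Finset.induction_on generalizing X₁ X₂ X₃ with
  | empty => exact card_triples_le_of_forall_subset_empty h₁ h₂ h₃
  | insert x U _ ih =>
    have hsplit : ∀ X : Finset (Finset α),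
        (#X : ℝ) = #(X.nonMemberSubfamily x) + #(X.memberSubfamily x) := fun X => by
      rw [add_comm]
      exact_mod_cast (card_memberSubfamily_add_card_nonMemberSubfamily x X).symm
    have hN₁ := forall_mem_nonMemberSubfamily_subset h₁
    have hN₂ := forall_mem_nonMemberSubfamily_subset h₂
    have hN₃ := forall_mem_nonMemberSubfamily_subset h₃
    have hM₁ := forall_mem_memberSubfamily_subset h₁
    have hM₂ := forall_mem_memberSubfamily_subset h₂
    have hM₃ := forall_mem_memberSubfamily_subset h₃
    calc (#(triples X₁ X₂ X₃) : ℝ)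
        ≤ #(triples (X₁.nonMemberSubfamily x) (X₂.nonMemberSubfamily x) (X₃.nonMemberSubfamily x)) +
          #(triples (X₁.memberSubfamily x) (X₂.nonMemberSubfamily x) (X₃.memberSubfamily x)) +
          #(triples (X₁.nonMemberSubfamily x) (X₂.memberSubfamily x) (X₃.memberSubfamily x)) := by
          exact_mod_cast card_triples_le_sum_subfamilies x X₁ X₂ X₃
      _ ≤ _ := by
          gcongr
          exacts [ih hN₁ hN₂ hN₃, ih hM₁ hN₂ hM₃, ih hN₁ hM₂ hM₃]
      _ ≤ _ := rpow_T_add_rpow_T_add_rpow_T_le (Nat.cast_nonneg _) (Nat.cast_nonneg _)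
          (Nat.cast_nonneg _) (Nat.cast_nonneg _) (Nat.cast_nonneg _) (Nat.cast_nonneg _)
      _ = ((#X₁ : ℝ) * #X₂ * #X₃) ^ T := by rw [hsplit X₁, hsplit X₂, hsplit X₃]

end Combinatorics

end DisjointUnionTriples

open DisjointUnionTriples

theorem stmt_0 (X : Finset (Finset ℕ)) :
    (((X ×ˢ X ×ˢ X).filter
      (fun t => Disjoint t.1 t.2.1 ∧ t.1 ∪ t.2.1 = t.2.2)).card : ℝ)
      ≤ (X.card : ℝ) ^ (3 / (Real.log (27 / 4) / Real.log 3)) := by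
  have hsub : ∀ A ∈ X, A ⊆ X.sup id := fun A hA => Finset.le_sup (f := id) hA
  have hexp : 3 / (Real.log (27 / 4) / Real.log 3) = 3 * T := by
    rw [T_eq, div_div_eq_mul_div, mul_div_assoc]
  calc (((X ×ˢ X ×ˢ X).filter (fun t => Disjoint t.1 t.2.1 ∧ t.1 ∪ t.2.1 = t.2.2)).card : ℝ)
      ≤ ((X.card : ℝ) * X.card * X.card) ^ T := card_triples_le_rpow _ hsub hsub hsub
    _ = (X.card : ℝ) ^ (3 / (Real.log (27 / 4) / Real.log 3)) := by
      rw [hexp, rpow_mul (Nat.cast_nonneg _), rpow_ofNat, pow_three, mul_assoc]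
end

section
/- For every ε > 0 there exist finite collections X of finite sets such that the number of triples (A₁, A₂, A) ∈ X³ with A = A₁ ⊎ A₂ exceeds |X|^(3/p - ε), where p = log_3(27/4). Concretely, taking X to be all subsets of {1,…,n} of cardinality n/3 or 2n/3 (n a multiple of 3), the count of such triples is n!/((n/3)!)³ while |X| = 2·n!/((n/3)!·(2n/3)!). -/
/-!
Take for `X` the `k`- and `2k`-subsets of a `3k`-set. If `A = A₁ ⊎ A₂` in `X`, then
`|A| = |A₁| + |A₂|` forces `|A₁| = |A₂| = k`, so there are `C(3k, k) C(2k, k)` such triples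
against `|X| = 2 C(3k, k)`. Up to polynomial factors `C(3k, k) ≈ (27/4)^k` (its `4^k`-multiple is
the largest term of `(1 + 2)^(3k)`) and `C(2k, k) ≈ 4^k`, so the exponent
`log #triples / log |X|` tends to `log 27 / log (27/4) = 3/p`.
-/

open Filter Topology Asymptotics Finset Nat

namespace Nat

lemma choose_mul_two_pow_le_succ {k i : ℕ} (hi : i < k) :
    (3 * k).choose i * 2 ^ (3 * k - i) ≤ (3 * k).choose (i + 1) * 2 ^ (3 * k - (i + 1)) := by
  refine Nat.le_of_mul_le_mul_right (c := i + 1) ?_ i.succ_pos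
  have hpow : 2 ^ (3 * k - i) = 2 * 2 ^ (3 * k - (i + 1)) := by
    rw [← pow_succ']; congr 1; omega
  calc (3 * k).choose i * 2 ^ (3 * k - i) * (i + 1)
      = (3 * k).choose i * (2 * (i + 1)) * 2 ^ (3 * k - (i + 1)) := by rw [hpow]; ring
    _ ≤ (3 * k).choose i * (3 * k - i) * 2 ^ (3 * k - (i + 1)) := by gcongr; omega
    _ = (3 * k).choose (i + 1) * 2 ^ (3 * k - (i + 1)) * (i + 1) := by
        rw [← choose_succ_right_eq]; ring

lemma choose_succ_mul_two_pow_le {k i : ℕ} (hi : k ≤ i) :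
    (3 * k).choose (i + 1) * 2 ^ (3 * k - (i + 1)) ≤ (3 * k).choose i * 2 ^ (3 * k - i) := by
  rcases lt_or_ge (3 * k) (i + 1) with hlt | hle
  · simp [choose_eq_zero_of_lt hlt]
  refine Nat.le_of_mul_le_mul_right (c := i + 1) ?_ i.succ_pos
  have hpow : 2 ^ (3 * k - i) = 2 * 2 ^ (3 * k - (i + 1)) := by
    rw [← pow_succ']; congr 1; omega
  calc (3 * k).choose (i + 1) * 2 ^ (3 * k - (i + 1)) * (i + 1)
      = (3 * k).choose i * (3 * k - i) * 2 ^ (3 * k - (i + 1)) := by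
        rw [← choose_succ_right_eq]; ring
    _ ≤ (3 * k).choose i * (2 * (i + 1)) * 2 ^ (3 * k - (i + 1)) := by gcongr; omega
    _ = (3 * k).choose i * 2 ^ (3 * k - i) * (i + 1) := by rw [hpow]; ring

lemma choose_mul_two_pow_le_middle (k i : ℕ) :
    (3 * k).choose i * 2 ^ (3 * k - i) ≤ (3 * k).choose k * 4 ^ k := by
  set f : ℕ → ℕ := fun i ↦ (3 * k).choose i * 2 ^ (3 * k - i)
  have hfk : f k = (3 * k).choose k * 4 ^ k := by
    simp only [f, show 3 * k - k = 2 * k by omega, pow_mul]; norm_num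
  rw [← hfk]
  rcases le_total i k with hik | hki
  · exact monotoneOn_of_le_add_one (f := f) Set.ordConnected_Iic
      (fun j _ _ hj ↦ choose_mul_two_pow_le_succ (Set.mem_Iic.1 hj)) hik Set.self_mem_Iic hik
  · exact antitoneOn_of_add_one_le (f := f) Set.ordConnected_Ici
      (fun j _ hj _ ↦ choose_succ_mul_two_pow_le hj) Set.self_mem_Ici hki hki

lemma sum_choose_mul_two_pow (n : ℕ) :
    ∑ i ∈ range (n + 1), n.choose i * 2 ^ (n - i) = 3 ^ n := by
  simpa [mul_comm] using (add_pow (1 : ℕ) 2 n).symm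

lemma choose_mul_four_pow_le (k : ℕ) : (3 * k).choose k * 4 ^ k ≤ 27 ^ k := by
  have hk : k ∈ range (3 * k + 1) := mem_range.2 (by omega)
  calc (3 * k).choose k * 4 ^ k = (3 * k).choose k * 2 ^ (3 * k - k) := by
        rw [show 3 * k - k = 2 * k by omega, pow_mul]; norm_num
    _ ≤ ∑ i ∈ range (3 * k + 1), (3 * k).choose i * 2 ^ (3 * k - i) :=
        single_le_sum (f := fun i ↦ (3 * k).choose i * 2 ^ (3 * k - i))
          (fun _ _ ↦ Nat.zero_le _) hk
    _ = 27 ^ k := by rw [sum_choose_mul_two_pow, pow_mul]; norm_num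

lemma pow_le_choose_mul_four_pow (k : ℕ) :
    27 ^ k ≤ (3 * k + 1) * ((3 * k).choose k * 4 ^ k) :=
  calc 27 ^ k = ∑ i ∈ range (3 * k + 1), (3 * k).choose i * 2 ^ (3 * k - i) := by
        rw [sum_choose_mul_two_pow, pow_mul]; norm_num
    _ ≤ ∑ _i ∈ range (3 * k + 1), (3 * k).choose k * 4 ^ k :=
        sum_le_sum fun i _ ↦ choose_mul_two_pow_le_middle k i
    _ = (3 * k + 1) * ((3 * k).choose k * 4 ^ k) := by simp

lemma choose_three_mul_mul_choose_two_mul (k : ℕ) :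
    (3 * k).choose k * (2 * k).choose k = (3 * k)! / k ! ^ 3 := by
  refine (Nat.div_eq_of_eq_mul_left (by positivity) ?_).symm
  have h₃ := choose_mul_factorial_mul_factorial (show k ≤ 3 * k by omega)
  have h₂ := choose_mul_factorial_mul_factorial (show k ≤ 2 * k by omega)
  rw [show 3 * k - k = 2 * k by omega] at h₃
  rw [show 2 * k - k = k by omega] at h₂
  rw [← h₃, ← h₂]
  ring

end Nat

lemma tendsto_log_div_natCast_of_pow_le {u : ℕ → ℝ} {c d : ℝ} (hc : 0 < c) (hd : 0 < d)
    (hlow : ∀ k : ℕ, c ^ k ≤ (d * k + 1) * u k) (hup : ∀ k : ℕ, u k ≤ c ^ k) :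
    Tendsto (fun k : ℕ ↦ Real.log (u k) / k) atTop (𝓝 (Real.log c)) := by
  have hlin : Tendsto (fun k : ℕ ↦ d * k + 1) atTop atTop :=
    tendsto_atTop_add_const_right _ 1 (tendsto_natCast_atTop_atTop.const_mul_atTop hd)
  have hlinO : (fun k : ℕ ↦ d * k + 1) =O[atTop] (fun k : ℕ ↦ (k : ℝ)) := by
    refine IsBigO.of_bound (d + 1) ?_
    filter_upwards [eventually_ge_atTop 1] with k hk
    have hk' : (1 : ℝ) ≤ k := by exact_mod_cast hk
    rw [Real.norm_of_nonneg (by positivity), Real.norm_of_nonneg (by positivity)]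
    nlinarith
  have hsmall : Tendsto (fun k : ℕ ↦ Real.log (d * k + 1) / k) atTop (𝓝 0) :=
    ((Real.isLittleO_log_id_atTop.comp_tendsto hlin).trans_isBigO hlinO).tendsto_div_nhds_zero
  refine tendsto_of_tendsto_of_tendsto_of_le_of_le' (by simpa using hsmall.const_sub (Real.log c))
    tendsto_const_nhds ?_ ?_
  all_goals
    filter_upwards [eventually_gt_atTop 0] with k hk
  all_goals
    have hk' : (0 : ℝ) < k := by exact_mod_cast hk
    have hck : 0 < c ^ k := pow_pos hc k
    have hlin0 : 0 < d * k + 1 := by positivity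
    have hu : 0 < u k := pos_of_mul_pos_right (hck.trans_le (hlow k)) hlin0.le
  · rw [le_div_iff₀ hk', sub_mul, div_mul_cancel₀ _ hk'.ne', sub_le_iff_le_add, mul_comm,
      ← Real.log_pow, add_comm, ← Real.log_mul hlin0.ne' hu.ne']
    exact Real.log_le_log hck (hlow k)
  · rw [div_le_iff₀ hk', mul_comm, ← Real.log_pow]
    exact Real.log_le_log hu (hup k)

namespace Finset

variable {α : Type*} [DecidableEq α]

def disjUnionTriples (X : Finset (Finset α)) : Finset (Finset α × Finset α × Finset α) :=
  (X ×ˢ X ×ˢ X).filter fun t ↦ Disjoint t.1 t.2.1 ∧ t.1 ∪ t.2.1 = t.2.2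

lemma card_sigma_powersetCard_sdiff (s : Finset α) (k l : ℕ) :
    #((powersetCard k s).sigma fun A ↦ powersetCard l (s \ A)) =
      (#s).choose k * (#s - k).choose l := by
  rw [card_sigma, sum_congr rfl fun A hA ↦ ?_, sum_const, card_powersetCard, smul_eq_mul]
  rw [mem_powersetCard] at hA
  rw [card_powersetCard, card_sdiff_of_subset hA.1, hA.2]

lemma card_powersetCard_union_two_mul (s : Finset α) {k : ℕ} (hk : 0 < k) :
    #(powersetCard k s ∪ powersetCard (2 * k) s) = (#s).choose k + (#s).choose (2 * k) := by
  rw [card_union_of_disjoint, card_powersetCard, card_powersetCard]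
  exact disjoint_left.2 fun A h₁ h₂ ↦ by
    rw [mem_powersetCard] at h₁ h₂
    omega

lemma mem_disjUnionTriples_powersetCard_union {s : Finset α} {k : ℕ} (hk : 0 < k)
    {t : Finset α × Finset α × Finset α} :
    t ∈ disjUnionTriples (powersetCard k s ∪ powersetCard (2 * k) s) ↔
      t.1 ∈ powersetCard k s ∧ t.2.1 ∈ powersetCard k (s \ t.1) ∧ t.2.2 = t.1 ∪ t.2.1 := by
  obtain ⟨A, B, C⟩ := t
  simp only [disjUnionTriples, mem_filter, mem_product, mem_union, mem_powersetCard,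
    subset_sdiff]
  constructor
  · rintro ⟨⟨hA, hB, hC⟩, hAB, rfl⟩
    have hcard := card_union_of_disjoint hAB
    refine ⟨⟨?_, ?_⟩, ⟨⟨?_, hAB.symm⟩, ?_⟩, rfl⟩ <;> grind
  · rintro ⟨⟨hAs, hAk⟩, ⟨⟨hBs, hBA⟩, hBk⟩, rfl⟩
    refine ⟨⟨Or.inl ⟨hAs, hAk⟩, Or.inl ⟨hBs, hBk⟩, Or.inr ⟨union_subset hAs hBs, ?_⟩⟩,
      hBA.symm, rfl⟩
    rw [card_union_of_disjoint hBA.symm, hAk, hBk, two_mul]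

lemma card_disjUnionTriples_powersetCard_union (s : Finset α) {k : ℕ} (hk : 0 < k) :
    #(disjUnionTriples (powersetCard k s ∪ powersetCard (2 * k) s)) =
      (#s).choose k * (#s - k).choose k := by
  rw [← card_sigma_powersetCard_sdiff]
  symm
  refine card_nbij' (fun p ↦ (p.1, p.2, p.1 ∪ p.2)) (fun t ↦ ⟨t.1, t.2.1⟩) ?_ ?_ ?_ ?_
  · rintro ⟨A, B⟩ h
    simpa [mem_disjUnionTriples_powersetCard_union hk] using h
  · rintro ⟨A, B, C⟩ h
    rw [mem_coe, mem_disjUnionTriples_powersetCard_union hk] at h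
    exact mem_sigma.2 ⟨h.1, h.2.1⟩
  · intro _ _; rfl
  · rintro ⟨A, B, C⟩ h
    rw [mem_coe, mem_disjUnionTriples_powersetCard_union hk] at h
    simpa using h.2.2.symm

end Finset

lemma card_powersetCard_union_range {k : ℕ} (hk : 0 < k) :
    #(powersetCard k (range (3 * k)) ∪ powersetCard (2 * k) (range (3 * k))) =
      2 * (3 * k).choose k := by
  rw [card_powersetCard_union_two_mul _ hk, card_range,
    Nat.choose_symm_of_eq_add (show 3 * k = 2 * k + k by ring), two_mul]

lemma card_disjUnionTriples_range {k : ℕ} (hk : 0 < k) :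
    #(disjUnionTriples (powersetCard k (range (3 * k)) ∪ powersetCard (2 * k) (range (3 * k)))) =
      (3 * k).choose k * (2 * k).choose k := by
  rw [card_disjUnionTriples_powersetCard_union _ hk, card_range, show 3 * k - k = 2 * k by omega]

lemma tendsto_log_choose_three_mul_div :
    Tendsto (fun k : ℕ ↦ Real.log ((3 * k).choose k) / k) atTop (𝓝 (Real.log (27 / 4))) := by
  refine tendsto_log_div_natCast_of_pow_le (d := 3) (by norm_num) (by norm_num)
    (fun k ↦ ?_) (fun k ↦ ?_) <;> rw [div_pow]
  · rw [div_le_iff₀ (by positivity), mul_assoc]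
    exact_mod_cast Nat.pow_le_choose_mul_four_pow k
  · rw [le_div_iff₀ (by positivity)]
    exact_mod_cast Nat.choose_mul_four_pow_le k

lemma tendsto_log_centralBinom_div :
    Tendsto (fun k : ℕ ↦ Real.log ((2 * k).choose k) / k) atTop (𝓝 (Real.log 4)) := by
  refine tendsto_log_div_natCast_of_pow_le (d := 2) (by norm_num) (by norm_num)
    (fun k ↦ ?_) (fun k ↦ ?_)
  · exact_mod_cast Nat.four_pow_le_two_mul_add_one_mul_central_binom k
  · exact_mod_cast Nat.centralBinom_le_four_pow k

lemma exists_card_rpow_lt_card_disjUnionTriples {r : ℝ}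
    (hr : r < Real.log 27 / Real.log (27 / 4)) :
    ∃ X : Finset (Finset ℕ), (#X : ℝ) ^ r < #(disjUnionTriples X) := by
  set a : ℕ → ℝ := fun k ↦ (3 * k).choose k
  set b : ℕ → ℝ := fun k ↦ (2 * k).choose k
  have ha : ∀ k, 1 ≤ a k := fun k ↦ Nat.one_le_cast.2 (Nat.choose_pos (by omega))
  have hb : ∀ k, 1 ≤ b k := fun k ↦ Nat.one_le_cast.2 (Nat.choose_pos (by omega))
  have hcard : Tendsto (fun k : ℕ ↦ Real.log (2 * a k) / k) atTop (𝓝 (Real.log (27 / 4))) := by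
    have := (tendsto_const_div_atTop_nhds_zero_nat (Real.log 2)).add
      tendsto_log_choose_three_mul_div
    rw [zero_add] at this
    refine this.congr fun k ↦ ?_
    rw [Real.log_mul two_ne_zero (by linarith [ha k]), add_div]
  have htriples : Tendsto (fun k : ℕ ↦ Real.log (a k * b k) / k) atTop (𝓝 (Real.log 27)) := by
    have := tendsto_log_choose_three_mul_div.add tendsto_log_centralBinom_div
    rw [← Real.log_mul (by norm_num) (by norm_num)] at this
    norm_num at this
    refine this.congr fun k ↦ ?_
    rw [Real.log_mul (by linarith [ha k]) (by linarith [hb k]), add_div]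
  have hratio := htriples.div hcard (Real.log_pos (by norm_num)).ne'
  obtain ⟨k, hk, hrk⟩ := ((eventually_gt_atTop 0).and (hratio.eventually (lt_mem_nhds hr))).exists
  refine ⟨powersetCard k (range (3 * k)) ∪ powersetCard (2 * k) (range (3 * k)), ?_⟩
  rw [card_powersetCard_union_range hk, card_disjUnionTriples_range hk]
  push_cast
  change (2 * a k) ^ r < a k * b k
  have hlog : 0 < Real.log (2 * a k) := Real.log_pos (by linarith [ha k])
  rw [Real.rpow_lt_iff_lt_log (by linarith [ha k]) (by nlinarith [ha k, hb k]),
    ← lt_div_iff₀ hlog]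
  rwa [Pi.div_apply, div_div_div_cancel_right₀ (Nat.cast_pos.2 hk).ne'] at hrk

theorem stmt_1 :
    (∀ ε : ℝ, 0 < ε → ∃ X : Finset (Finset ℕ),
      ((X.card : ℝ) ^ (3 / (Real.log (27 / 4) / Real.log 3) - ε) <
        (((X ×ˢ X ×ˢ X).filter
          (fun t => Disjoint t.1 t.2.1 ∧ t.1 ∪ t.2.1 = t.2.2)).card : ℝ))) ∧
    (∀ n : ℕ, 0 < n → 3 ∣ n →
      ∀ X : Finset (Finset ℕ),
        X = (Finset.range n).powerset.filter
              (fun A => A.card = n / 3 ∨ A.card = 2 * n / 3) →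
        ((X ×ˢ X ×ˢ X).filter
          (fun t => Disjoint t.1 t.2.1 ∧ t.1 ∪ t.2.1 = t.2.2)).card
            = n.factorial / ((n / 3).factorial) ^ 3 ∧
        X.card = 2 * (n.factorial / ((n / 3).factorial * ((2 * n / 3).factorial)))) := by
  constructor
  · intro ε hε
    have hexp : 3 / (Real.log (27 / 4) / Real.log 3) = Real.log 27 / Real.log (27 / 4) := by
      rw [show (27 : ℝ) = 3 ^ 3 by norm_num, Real.log_pow]
      push_cast
      field_simp
    exact exists_card_rpow_lt_card_disjUnionTriples (by linarith)
  · rintro n hn ⟨k, rfl⟩ X rfl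
    have hk : 0 < k := by omega
    rw [show 3 * k / 3 = k by omega, show 2 * (3 * k) / 3 = 2 * k by omega, filter_or,
      ← powersetCard_eq_filter, ← powersetCard_eq_filter]
    refine ⟨(card_disjUnionTriples_range hk).trans (Nat.choose_three_mul_mul_choose_two_mul k),
      (card_powersetCard_union_range hk).trans ?_⟩
    rw [Nat.choose_eq_factorial_div_factorial (by omega), show 3 * k - k = 2 * k by omega]
end

section
/- Let p = log_3(27/4). If ε ≤ b, c ≤ 1 for some ε > 0, then (b(1−c))^(1/p) + (c(1−b))^(1/p) < 1. -/
theorem stmt_8 (ε : ℝ) (hε : 0 < ε) (b c : ℝ) (hb : ε ≤ b) (hb1 : b ≤ 1)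
    (hc : ε ≤ c) (hc1 : c ≤ 1) :
    (b * (1 - c)) ^ (1 / (Real.log (27 / 4) / Real.log 3)) +
    (c * (1 - b)) ^ (1 / (Real.log (27 / 4) / Real.log 3)) < 1 := by
  have h3 : (0:ℝ) < Real.log 3 := Real.log_pos (by norm_num)
  have h274 : (0:ℝ) < Real.log (27/4) := Real.log_pos (by norm_num)
  set q : ℝ := 1 / (Real.log (27 / 4) / Real.log 3) with hqdef
  have hq : 1/2 < q := by
    rw [hqdef, one_div_div, lt_div_iff₀ h274]
    have h9 : Real.log (27/4) < Real.log 9 :=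
      Real.log_lt_log (by norm_num) (by norm_num)
    have h92 : Real.log 9 = 2 * Real.log 3 := by
      rw [show (9:ℝ) = 3^2 by norm_num, Real.log_pow]; push_cast; ring
    linarith
  have hq0 : 0 < q := lt_trans (by norm_num) hq
  have key : ∀ t : ℝ, 0 ≤ t → t < 1 → t ^ q ≤ Real.sqrt t := by
    intro t h0 h1
    rcases eq_or_lt_of_le h0 with h|h
    · rw [← h, Real.zero_rpow (ne_of_gt hq0), Real.sqrt_zero]
    · rw [Real.sqrt_eq_rpow]
      exact le_of_lt (Real.rpow_lt_rpow_of_exponent_gt h h1 hq)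
  have keys : ∀ t : ℝ, 0 < t → t < 1 → t ^ q < Real.sqrt t := by
    intro t h0 h1
    rw [Real.sqrt_eq_rpow]
    exact Real.rpow_lt_rpow_of_exponent_gt h0 h1 hq
  have hb0 : 0 < b := lt_of_lt_of_le hε hb
  have hc0 : 0 < c := lt_of_lt_of_le hε hc
  have hx0 : 0 ≤ b * (1 - c) := mul_nonneg hb0.le (by linarith)
  have hy0 : 0 ≤ c * (1 - b) := mul_nonneg hc0.le (by linarith)
  have hx1 : b * (1 - c) < 1 := by nlinarith
  have hy1 : c * (1 - b) < 1 := by nlinarith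
  have sx : Real.sqrt (b * (1 - c)) ≤ (b + (1 - c)) / 2 := by
    have hle : b * (1 - c) ≤ ((b + (1 - c)) / 2)^2 := by nlinarith [sq_nonneg (b - (1 - c))]
    calc Real.sqrt (b * (1-c)) ≤ Real.sqrt (((b + (1 - c)) / 2)^2) := Real.sqrt_le_sqrt hle
      _ = (b + (1 - c)) / 2 := Real.sqrt_sq (by linarith)
  have sy : Real.sqrt (c * (1 - b)) ≤ (c + (1 - b)) / 2 := by
    have hle : c * (1 - b) ≤ ((c + (1 - b)) / 2)^2 := by nlinarith [sq_nonneg (c - (1 - b))]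
    calc Real.sqrt (c * (1-b)) ≤ Real.sqrt (((c + (1 - b)) / 2)^2) := Real.sqrt_le_sqrt hle
      _ = (c + (1 - b)) / 2 := Real.sqrt_sq (by linarith)
  rcases eq_or_lt_of_le hx0 with h|h
  · rcases eq_or_lt_of_le hy0 with h'|h'
    · rw [← h, ← h', Real.zero_rpow (ne_of_gt hq0)]; norm_num
    · have k1 := key _ hx0 hx1
      have k2 := keys _ h' hy1
      have hsx : Real.sqrt (b * (1 - c)) = 0 := by rw [← h, Real.sqrt_zero]
      linarith
  · have k1 := keys _ h hx1
    have k2 := key _ hy0 hy1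
    linarith
end

section
/- Let p = log_3(27/4) and define f(x) = log(1 + x^p) for x > 0. Then for all x, y, z > 0, the inequality (ab(1−c))^(1/p) + (bc(1−a))^(1/p) + (ca(1−b))^(1/p) ≤ 1 with a = 1/(1+x^p), b = 1/(1+y^p), c = 1/(1+z^p) is equivalent to f(x) + f(y) + f(z) − p·log(x+y+z) ≥ 0. -/
/-!
With `a = 1/(1+x^p)` etc. and `D = (1+x^p)(1+y^p)(1+z^p)`, each product `a b (1-c)` equals
`z^p / D`, so its `1/p`-th power is `z / D^(1/p)`. The left inequality therefore reads
`x + y + z ≤ D^(1/p)`, and taking logarithms turns it into `p log(x+y+z) ≤ log D`, which is the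
right inequality since `log D = f(x) + f(y) + f(z)`.
-/

open Real

lemma one_div_mul_one_div_mul_one_sub_one_div {u v w : ℝ}
    (hu : 1 + u ≠ 0) (hv : 1 + v ≠ 0) (hw : 1 + w ≠ 0) :
    1 / (1 + u) * (1 / (1 + v)) * (1 - 1 / (1 + w)) = w / ((1 + u) * (1 + v) * (1 + w)) := by
  field_simp
  ring

lemma Real.rpow_div_rpow_inv {w D p : ℝ} (hw : 0 ≤ w) (hD : 0 ≤ D) (hp : p ≠ 0) :
    (w ^ p / D) ^ p⁻¹ = w / D ^ p⁻¹ := by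
  rw [div_rpow (rpow_nonneg hw p) hD, rpow_rpow_inv hw hp]

lemma Real.le_rpow_inv_iff_mul_log_le {s D p : ℝ} (hs : 0 < s) (hD : 0 < D) (hp : 0 < p) :
    s ≤ D ^ p⁻¹ ↔ p * log s ≤ log D := by
  rw [le_rpow_inv_iff_of_pos hs.le hD.le hp, ← log_rpow hs,
    log_le_log_iff (rpow_pos_of_pos hs p) hD]

theorem rpow_sum_le_one_iff_mul_log_le {p x y z : ℝ} (hp : 0 < p)
    (hx : 0 < x) (hy : 0 < y) (hz : 0 < z) :
    (let a := 1 / (1 + x ^ p)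
     let b := 1 / (1 + y ^ p)
     let c := 1 / (1 + z ^ p)
     (a * b * (1 - c)) ^ (1 / p) + (b * c * (1 - a)) ^ (1 / p) +
       (c * a * (1 - b)) ^ (1 / p) ≤ 1) ↔
    p * log (x + y + z) ≤ log (1 + x ^ p) + log (1 + y ^ p) + log (1 + z ^ p) := by
  have hX : 0 < 1 + x ^ p := by positivity
  have hY : 0 < 1 + y ^ p := by positivity
  have hZ : 0 < 1 + z ^ p := by positivity
  set D := (1 + x ^ p) * (1 + y ^ p) * (1 + z ^ p) with hD_def
  have hD : 0 < D := by positivity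
  have hlogD : log D = log (1 + x ^ p) + log (1 + y ^ p) + log (1 + z ^ p) := by
    rw [log_mul (by positivity) hZ.ne', log_mul hX.ne' hY.ne']
  have hxyz : 1 / (1 + x ^ p) * (1 / (1 + y ^ p)) * (1 - 1 / (1 + z ^ p)) = z ^ p / D :=
    one_div_mul_one_div_mul_one_sub_one_div hX.ne' hY.ne' hZ.ne'
  have hyzx : 1 / (1 + y ^ p) * (1 / (1 + z ^ p)) * (1 - 1 / (1 + x ^ p)) = x ^ p / D := by
    rw [one_div_mul_one_div_mul_one_sub_one_div hY.ne' hZ.ne' hX.ne', hD_def]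
    ring
  have hzxy : 1 / (1 + z ^ p) * (1 / (1 + x ^ p)) * (1 - 1 / (1 + y ^ p)) = y ^ p / D := by
    rw [one_div_mul_one_div_mul_one_sub_one_div hZ.ne' hX.ne' hY.ne', hD_def]
    ring
  simp only [hxyz, hyzx, hzxy, one_div p, rpow_div_rpow_inv hx.le hD.le hp.ne',
    rpow_div_rpow_inv hy.le hD.le hp.ne', rpow_div_rpow_inv hz.le hD.le hp.ne', ← add_div,
    div_le_one (rpow_pos_of_pos hD p⁻¹), ← hlogD]
  rw [show z + x + y = x + y + z by ring, le_rpow_inv_iff_mul_log_le (by positivity) hD hp]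

theorem stmt_9 (x y z : ℝ) (hx : 0 < x) (hy : 0 < y) (hz : 0 < z) :
    (let p := Real.log (27 / 4) / Real.log 3
     let a := 1 / (1 + x ^ p)
     let b := 1 / (1 + y ^ p)
     let c := 1 / (1 + z ^ p)
     (a * b * (1 - c)) ^ (1 / p) + (b * c * (1 - a)) ^ (1 / p) +
       (c * a * (1 - b)) ^ (1 / p) ≤ 1) ↔
    (let p := Real.log (27 / 4) / Real.log 3
     Real.log (1 + x ^ p) + Real.log (1 + y ^ p) + Real.log (1 + z ^ p)
       - p * Real.log (x + y + z) ≥ 0) := by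
  have hp : 0 < Real.log (27 / 4) / Real.log 3 :=
    div_pos (log_pos (by norm_num)) (log_pos (by norm_num))
  rw [rpow_sum_le_one_iff_mul_log_le hp hx hy hz]
  exact sub_nonneg.symm
end

section
/- Let p = log_3(27/4). The equation u = 1 + (u/2)^(1/(p−1)) in u > 0 has exactly two solutions: u = 2 and one solution with u > 2. -/
/-!
With `q = 1 / (p - 1) = log 3 / log (9 / 4) > 1`, the solutions are the positive zeros of
`g u = (u / 2) ^ q - (u - 1)`. This `g` is strictly convex, so it has at most two zeros: a third
one would lie strictly below the chord through the other two. One zero is `u = 2`; another lies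
in `[10, 16]` by the intermediate value theorem, since `g 10 = 5 ^ q - 9 < 0` and
`g 16 = 8 ^ q - 15 > 0`.
-/

open Real Set

lemma StrictConvexOn.setOf_apply_eq_eq_pair {s : Set ℝ} {f : ℝ → ℝ} (hf : StrictConvexOn ℝ s f)
    {x y : ℝ} (hx : x ∈ s) (hy : y ∈ s) (hxy : x < y) (hfxy : f x = f y) :
    {z ∈ s | f z = f x} = {x, y} := by
  have below_chord : ∀ {a m b}, a ∈ s → b ∈ s → a < m → m < b → f m < max (f a) (f b) :=
    fun ha hb ham hmb =>
      hf.lt_on_openSegment ha hb (ham.trans hmb).ne <| by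
        rw [openSegment_eq_Ioo (ham.trans hmb)]; exact ⟨ham, hmb⟩
  ext z
  simp only [mem_ofPred_eq, mem_insert_iff, mem_singleton_iff]
  constructor
  · rintro ⟨hz, hfz⟩
    rcases lt_trichotomy z x with hzx | rfl | hxz
    · have := below_chord hz hy hzx hxy
      simp [hfz, ← hfxy] at this
    · exact Or.inl rfl
    rcases lt_trichotomy z y with hzy | rfl | hyz
    · have := below_chord hx hy hxz hzy
      simp [hfz, ← hfxy] at this
    · exact Or.inr rfl
    · have := below_chord hx hz hxy hyz
      simp [hfz, hfxy] at this
  · rintro (rfl | rfl)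
    · exact ⟨hx, rfl⟩
    · exact ⟨hy, hfxy.symm⟩

lemma strictConvexOn_div_rpow_sub {c q : ℝ} (hc : 0 < c) (hq : 1 < q) (d : ℝ) :
    StrictConvexOn ℝ (Ici 0) fun u : ℝ => (u / c) ^ q - (u - d) := by
  have hpow : StrictConvexOn ℝ (Ici 0) fun u : ℝ => (u / c) ^ q := by
    refine ⟨convex_Ici 0, fun x hx y hy hxy a b ha hb hab => ?_⟩
    have := (strictConvexOn_rpow hq).2 (div_nonneg hx hc.le) (div_nonneg hy hc.le)
      (by rwa [Ne, div_left_inj' hc.ne']) ha hb hab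
    simpa only [smul_eq_mul, add_div, mul_div_assoc] using this
  exact hpow.sub_concaveOn ((concaveOn_id (convex_Ici 0)).sub (convexOn_const d (convex_Ici 0)))

lemma one_div_log_div_log_sub_one :
    1 / (log (27 / 4) / log 3 - 1) = log 3 / log (9 / 4) := by
  have hlog3 : log 3 ≠ 0 := (log_pos (by norm_num)).ne'
  have hsplit : log (27 / 4) = log (9 / 4) + log 3 := by
    rw [← log_mul (by norm_num) (by norm_num)]; norm_num
  rw [hsplit, add_div, div_self hlog3, add_sub_cancel_right, one_div_div]

lemma one_lt_log_three_div_log_nine_div_four : 1 < log 3 / log (9 / 4) :=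
  (one_lt_div (log_pos (by norm_num))).2 (log_lt_log (by norm_num) (by norm_num))

lemma five_rpow_log_three_div_log_nine_div_four_lt : (5 : ℝ) ^ (log 3 / log (9 / 4)) < 9 := by
  have hlog3 : 0 < log 3 := log_pos (by norm_num)
  have hlog5 : log 5 < 2 * log (9 / 4) := by
    have := log_lt_log (by norm_num) (by norm_num : (5 : ℝ) < (9 / 4) ^ 2)
    rwa [log_pow, Nat.cast_ofNat] at this
  have hlog9 : log 9 = 2 * log 3 := by
    rw [show (9 : ℝ) = 3 ^ 2 by norm_num, log_pow, Nat.cast_ofNat]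
  rw [rpow_lt_iff_lt_log (by norm_num) (by norm_num), div_mul_eq_mul_div,
    div_lt_iff₀ (log_pos (by norm_num)), hlog9]
  nlinarith

lemma sixteen_le_eight_rpow_log_three_div_log_nine_div_four :
    16 ≤ (8 : ℝ) ^ (log 3 / log (9 / 4)) := by
  have hlog2 : 0 < log 2 := log_pos (by norm_num)
  have hlog_pow : 4 * log (9 / 4) ≤ 3 * log 3 := by
    have := log_le_log (by norm_num) (by norm_num : ((9 : ℝ) / 4) ^ 4 ≤ 3 ^ 3)
    rwa [log_pow, log_pow, Nat.cast_ofNat, Nat.cast_ofNat] at this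
  have hlog8 : log 8 = 3 * log 2 := by
    rw [show (8 : ℝ) = 2 ^ 3 by norm_num, log_pow, Nat.cast_ofNat]
  have hlog16 : log 16 = 4 * log 2 := by
    rw [show (16 : ℝ) = 2 ^ 4 by norm_num, log_pow, Nat.cast_ofNat]
  rw [le_rpow_iff_log_le (by norm_num) (by norm_num), div_mul_eq_mul_div,
    le_div_iff₀ (log_pos (by norm_num)), hlog8, hlog16]
  nlinarith

theorem stmt_11 :
    ∃ u₀ : ℝ, 2 < u₀ ∧
      {u : ℝ | 0 < u ∧
        u = 1 + (u / 2) ^ (1 / (Real.log (27 / 4) / Real.log 3 - 1))}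
        = {2, u₀} := by
  rw [one_div_log_div_log_sub_one]
  set q := log 3 / log (9 / 4)
  have hq : 1 < q := one_lt_log_three_div_log_nine_div_four
  set g : ℝ → ℝ := fun u => (u / 2) ^ q - (u - 1)
  have hg : StrictConvexOn ℝ (Ioi 0) g :=
    (strictConvexOn_div_rpow_sub two_pos hq 1).subset Ioi_subset_Ici_self (convex_Ioi 0)
  have hg_cont : Continuous g :=
    ((continuous_id.div_const 2).rpow_const fun _ => Or.inr (by linarith)).sub
      (continuous_id.sub continuous_const)
  have hg2 : g 2 = 0 := by norm_num [g]
  have hg10 : g 10 ≤ 0 := by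
    have := five_rpow_log_three_div_log_nine_div_four_lt
    norm_num [g]; linarith
  have hg16 : 0 ≤ g 16 := by
    have := sixteen_le_eight_rpow_log_three_div_log_nine_div_four
    norm_num [g]; linarith
  obtain ⟨u₀, ⟨h10u₀, -⟩, hgu₀⟩ :=
    intermediate_value_Icc (by norm_num) hg_cont.continuousOn ⟨hg10, hg16⟩
  have h2u₀ : 2 < u₀ := by linarith
  refine ⟨u₀, h2u₀, ?_⟩
  rw [← hg.setOf_apply_eq_eq_pair (mem_Ioi.2 two_pos) (mem_Ioi.2 (two_pos.trans h2u₀)) h2u₀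
    (hg2.trans hgu₀.symm), hg2]
  ext u
  simp only [mem_ofPred_eq, mem_Ioi, g]
  constructor <;> rintro ⟨hu, h⟩ <;> exact ⟨hu, by linarith⟩
end

section
/- Let p = log_2 6. For all real a₀, a₁ ≥ 0, one has a₀^p + 4(a₀a₁)^(p/2) + a₁^p ≤ (a₀ + a₁)^p. -/
/-!
Both sides are homogeneous of degree `p`, so after dividing by `(a₀ a₁)^(p/2)` and writing
`a₀ / √(a₀ a₁) = eˢ`, the claim becomes `G s := (eˢ + e⁻ˢ)^p - e^{ps} - e^{-ps} ≥ 4` for `s ≥ 0`.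
Since `2^p = 6` we have `G 0 = 4`, and `G' ≥ 0` amounts to `A^p - B^p ≤ (A + B)^(p-1) (A - B)`
for `A ≥ B > 0`. With `t = B / A` and `t^p ≥ t³` (as `p ≤ 3`) this follows from
`(1 + t)^(p-1) ≥ 1 + t + t²` on `[0, 1]`, where `2^(p-1) = 3` gives equality at both ends.
-/

open Real Set

lemma monotoneOn_of_hasDerivAt_of_nonneg {D : Set ℝ} (hD : Convex ℝ D) {f f' : ℝ → ℝ}
    (hf : ∀ x ∈ D, HasDerivAt f (f' x) x) (hf' : ∀ x ∈ interior D, 0 ≤ f' x) :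
    MonotoneOn f D :=
  monotoneOn_of_hasDerivWithinAt_nonneg hD
    (fun x hx ↦ (hf x hx).continuousAt.continuousWithinAt)
    (fun x hx ↦ (hf x (interior_subset hx)).hasDerivWithinAt) hf'

lemma antitoneOn_of_hasDerivAt_of_nonpos {D : Set ℝ} (hD : Convex ℝ D) {f f' : ℝ → ℝ}
    (hf : ∀ x ∈ D, HasDerivAt f (f' x) x) (hf' : ∀ x ∈ interior D, f' x ≤ 0) :
    AntitoneOn f D :=
  antitoneOn_of_hasDerivWithinAt_nonpos hD
    (fun x hx ↦ (hf x hx).continuousAt.continuousWithinAt)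
    (fun x hx ↦ (hf x (interior_subset hx)).hasDerivWithinAt) hf'

lemma hasDerivAt_mul_log_one_add_sub_log (c : ℝ) {x : ℝ} (hx : 0 ≤ x) :
    HasDerivAt (fun x ↦ c * log (1 + x) - log (1 + x + x ^ 2))
      (c / (1 + x) - (1 + 2 * x) / (1 + x + x ^ 2)) x := by
  have h₁ : HasDerivAt (fun x : ℝ ↦ 1 + x) 1 x := (hasDerivAt_id x).const_add 1
  have h₂ : HasDerivAt (fun x : ℝ ↦ 1 + x + x ^ 2) (1 + 2 * x) x := by
    refine (h₁.add (hasDerivAt_pow 2 x)).congr_deriv ?_; push_cast; ring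
  exact (((h₁.log (by positivity)).const_mul c).sub (h₂.log (by positivity))).congr_deriv
    (by ring)

lemma one_add_add_sq_le_one_add_rpow {c : ℝ} (hc3 : 3 ≤ (2 : ℝ) ^ c) (hc2 : c ≤ 2) {q : ℝ}
    (hq0 : 0 ≤ q) (hq1 : q ≤ 1) : 1 + q + q ^ 2 ≤ (1 + q) ^ c := by
  set f : ℝ → ℝ := fun x ↦ c * log (1 + x) - log (1 + x + x ^ 2)
  have hf : ∀ x ∈ Ici (0 : ℝ), HasDerivAt f (c / (1 + x) - (1 + 2 * x) / (1 + x + x ^ 2)) x :=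
    fun x hx ↦ hasDerivAt_mul_log_one_add_sub_log c hx
  -- On `[0, ∞)` the sign of `f'` is that of `c (1 + x + x²) - (1 + 2x)(1 + x)`, which decreases
  -- in `x`: so `f` increases and then decreases, and `f 0 = 0 ≤ f 1`.
  have sign_iff : ∀ x, 0 ≤ x → (0 ≤ c / (1 + x) - (1 + 2 * x) / (1 + x + x ^ 2) ↔
      (1 + 2 * x) * (1 + x) ≤ c * (1 + x + x ^ 2)) := fun x hx ↦ by
    rw [sub_nonneg, div_le_div_iff₀ (by positivity) (by positivity)]
  have decreasing : ∀ x y, 0 ≤ x → x ≤ y →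
      c * (1 + y + y ^ 2) - (1 + 2 * y) * (1 + y) ≤ c * (1 + x + x ^ 2) - (1 + 2 * x) * (1 + x) :=
    fun x y hx hxy ↦ by nlinarith [mul_nonneg (sub_nonneg.2 hxy) (sub_nonneg.2 hc2)]
  have hfq : 0 ≤ f q := by
    by_cases hq : (1 + 2 * q) * (1 + q) ≤ c * (1 + q + q ^ 2)
    · have mono : MonotoneOn f (Icc 0 q) :=
        monotoneOn_of_hasDerivAt_of_nonneg (convex_Icc 0 q) (fun x hx ↦ hf x hx.1) fun x hx ↦ by
          rw [interior_Icc] at hx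
          rw [sign_iff x hx.1.le]
          linarith [decreasing x q hx.1.le hx.2.le]
      simpa [f] using mono (left_mem_Icc.2 hq0) (right_mem_Icc.2 hq0) hq0
    · have anti : AntitoneOn f (Icc q 1) :=
        antitoneOn_of_hasDerivAt_of_nonpos (convex_Icc q 1) (fun x hx ↦ hf x (hq0.trans hx.1))
          fun x hx ↦ by
          rw [interior_Icc] at hx
          have := (sign_iff x (hq0.trans hx.1.le)).not.2 (by linarith [decreasing q x hq0 hx.1.le])
          linarith
      have hf1 : 0 ≤ f 1 := by
        have : log 3 ≤ c * log 2 := by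
          rw [← log_rpow two_pos]; exact log_le_log (by norm_num) hc3
        norm_num [f]; linarith
      exact hf1.trans (anti (left_mem_Icc.2 hq1) (right_mem_Icc.2 hq1) hq1)
  rw [← log_le_log_iff (by positivity) (by positivity), log_rpow (by positivity)]
  exact sub_nonneg.1 hfq

section

variable {p : ℝ}

lemma one_sub_rpow_le_one_add_rpow_mul (hp6 : 6 ≤ (2 : ℝ) ^ p) (hp3 : p ≤ 3) {t : ℝ}
    (ht0 : 0 < t) (ht1 : t ≤ 1) : 1 - t ^ p ≤ (1 + t) ^ (p - 1) * (1 - t) := by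
  have hc3 : 3 ≤ (2 : ℝ) ^ (p - 1) := by
    rw [rpow_sub_one two_ne_zero]; linarith
  have h3 : t ^ 3 ≤ t ^ p := by
    simpa using rpow_le_rpow_of_exponent_ge ht0 ht1 hp3
  calc 1 - t ^ p ≤ (1 + t + t ^ 2) * (1 - t) := by nlinarith
    _ ≤ (1 + t) ^ (p - 1) * (1 - t) :=
      mul_le_mul_of_nonneg_right (one_add_add_sq_le_one_add_rpow hc3 (by linarith) ht0.le ht1)
        (by linarith)

lemma rpow_sub_rpow_le_add_rpow_mul_sub (hp6 : 6 ≤ (2 : ℝ) ^ p) (hp3 : p ≤ 3) {a b : ℝ}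
    (hb : 0 < b) (hba : b ≤ a) : a ^ p - b ^ p ≤ (a + b) ^ (p - 1) * (a - b) := by
  have ha : 0 < a := hb.trans_le hba
  obtain ⟨t, rfl⟩ : ∃ t, b = a * t := ⟨b / a, by field_simp⟩
  have ht0 : 0 < t := pos_of_mul_pos_right hb ha.le
  have ht1 : t ≤ 1 := le_of_mul_le_mul_left (by linarith) ha
  calc a ^ p - (a * t) ^ p = a ^ p * (1 - t ^ p) := by
        rw [mul_rpow ha.le ht0.le]; ring
    _ ≤ a ^ p * ((1 + t) ^ (p - 1) * (1 - t)) :=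
        mul_le_mul_of_nonneg_left (one_sub_rpow_le_one_add_rpow_mul hp6 hp3 ht0 ht1)
          (rpow_nonneg ha.le p)
    _ = (a + a * t) ^ (p - 1) * (a - a * t) := by
        rw [← mul_one_add, mul_rpow ha.le (by positivity), rpow_sub_one ha.ne']
        field_simp

lemma exp_mul_add_exp_neg_mul_add_four_le (hp6 : 6 ≤ (2 : ℝ) ^ p) (hp3 : p ≤ 3) {s : ℝ}
    (hs : 0 ≤ s) : exp (p * s) + exp (-(p * s)) + 4 ≤ (exp s + exp (-s)) ^ p := by
  have hp : 0 < p := (rpow_lt_rpow_left_iff one_lt_two).1 (by rw [rpow_zero]; linarith)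
  set G : ℝ → ℝ := fun s ↦ (exp s + exp (-s)) ^ p - exp (p * s) - exp (-(p * s))
  have hG : ∀ s, HasDerivAt G
      (p * ((exp s + exp (-s)) ^ (p - 1) * (exp s - exp (-s)) - exp (p * s) + exp (-(p * s)))) s := by
    intro s
    have h₁ : HasDerivAt (fun s ↦ exp s + exp (-s)) (exp s - exp (-s)) s :=
      ((hasDerivAt_exp s).add (hasDerivAt_neg s).exp).congr_deriv (by ring)
    have h₂ : HasDerivAt (fun s ↦ exp (p * s)) (exp (p * s) * p) s := by
      simpa using ((hasDerivAt_id s).const_mul p).exp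
    have h₃ : HasDerivAt (fun s ↦ exp (-(p * s))) (exp (-(p * s)) * -p) s := by
      simpa using ((hasDerivAt_id s).const_mul p).neg.exp
    exact ((h₁.rpow_const (Or.inl (by positivity))).sub h₂ |>.sub h₃).congr_deriv (by ring)
  have mono : MonotoneOn G (Ici 0) :=
    monotoneOn_of_hasDerivAt_of_nonneg (convex_Ici 0) (fun x _ ↦ hG x) fun x hx ↦ by
      rw [interior_Ici] at hx
      have key := rpow_sub_rpow_le_add_rpow_mul_sub hp6 hp3 (a := exp x) (exp_pos (-x))
        (exp_le_exp.2 (by linarith [mem_Ioi.1 hx]))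
      rw [← exp_mul, ← exp_mul, neg_mul, mul_comm x p] at key
      exact mul_nonneg hp.le (by linarith)
  have hG0 : 4 ≤ G 0 := by
    norm_num [G]; linarith
  have := hG0.trans (mono self_mem_Ici hs hs)
  simp only [G] at this
  linarith

lemma rpow_add_rpow_add_four_le_of_mul_eq_one (hp6 : 6 ≤ (2 : ℝ) ^ p) (hp3 : p ≤ 3) {x y : ℝ}
    (hx : 0 < x) (hy : 0 < y) (hxy : x * y = 1) : x ^ p + y ^ p + 4 ≤ (x + y) ^ p := by
  wlog hyx : y ≤ x generalizing x y
  · rw [add_comm (x ^ p), add_comm x]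
    exact this hy hx (by rwa [mul_comm]) (by linarith)
  have hs : 0 ≤ log x := log_nonneg (by nlinarith)
  have hy' : y = exp (-log x) := by rw [exp_neg, exp_log hx, eq_inv_of_mul_eq_one_right hxy]
  have hxp : exp (p * log x) = x ^ p := by rw [rpow_def_of_pos hx, mul_comm]
  have hyp : exp (-(p * log x)) = y ^ p := by rw [hy', ← exp_mul]; ring_nf
  have := exp_mul_add_exp_neg_mul_add_four_le hp6 hp3 hs
  rwa [hxp, hyp, exp_log hx, ← hy'] at this

lemma rpow_add_four_mul_rpow_add_rpow_le_add_rpow (hp6 : 6 ≤ (2 : ℝ) ^ p) (hp3 : p ≤ 3)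
    {a b : ℝ} (ha : 0 ≤ a) (hb : 0 ≤ b) :
    a ^ p + 4 * (a * b) ^ (p / 2) + b ^ p ≤ (a + b) ^ p := by
  have hp : 0 < p := (rpow_lt_rpow_left_iff one_lt_two).1 (by rw [rpow_zero]; linarith)
  rcases ha.eq_or_lt with rfl | ha
  · simp [zero_rpow hp.ne', zero_rpow (half_pos hp).ne']
  rcases hb.eq_or_lt with rfl | hb
  · simp [zero_rpow hp.ne', zero_rpow (half_pos hp).ne']
  set m := √(a * b)
  have hm : 0 < m := sqrt_pos.2 (mul_pos ha hb)
  have hmp : m ^ p = (a * b) ^ (p / 2) := by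
    rw [show m = (a * b) ^ (1 / 2 : ℝ) from sqrt_eq_rpow _, ← rpow_mul (mul_pos ha hb).le]
    ring_nf
  have hdiv : ∀ c, 0 < c → (c / m) ^ p * m ^ p = c ^ p := fun c hc ↦ by
    rw [← mul_rpow (div_pos hc hm).le hm.le, div_mul_cancel₀ _ hm.ne']
  have key := mul_le_mul_of_nonneg_right
    (rpow_add_rpow_add_four_le_of_mul_eq_one hp6 hp3 (div_pos ha hm) (div_pos hb hm)
      (by rw [div_mul_div_comm, ← sq, sq_sqrt (mul_pos ha hb).le, div_self (mul_pos ha hb).ne']))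
    (rpow_nonneg hm.le p)
  rw [← add_div, add_mul, add_mul, hdiv a ha, hdiv b hb, hdiv _ (add_pos ha hb), hmp] at key
  linarith

end

theorem stmt_13 (a₀ a₁ : ℝ) (h₀ : 0 ≤ a₀) (h₁ : 0 ≤ a₁) :
    a₀ ^ (Real.log 6 / Real.log 2) +
      4 * (a₀ * a₁) ^ ((Real.log 6 / Real.log 2) / 2) +
      a₁ ^ (Real.log 6 / Real.log 2)
      ≤ (a₀ + a₁) ^ (Real.log 6 / Real.log 2) :=
  rpow_add_four_mul_rpow_add_rpow_le_add_rpow (p := logb 2 6)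
    (rpow_logb two_pos one_lt_two.ne' (by norm_num)).ge
    ((logb_le_iff_le_rpow one_lt_two (by norm_num)).2 (by norm_num)) h₀ h₁
end

section
/- Let p = log_2 6. For all x with 0 ≤ x ≤ 1, one has x^p + 4x^(p/2) + 1 ≤ (1+x)^p, with equality at x = 1. -/
open MeasureTheory intervalIntegral Real


lemma J_nonneg (g s : ℝ) (hg0 : 0 ≤ g) (hg1 : g ≤ 1) :
    (max (1 - s) 0)^2 + (max (g^2 - s) 0)^2 + (max (2*g - s) 0)^2
      ≤ (max (1 + g^2 - s) 0)^2 + 2 * (max (g - s) 0)^2 := by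
  have hgg : g^2 ≤ g := by nlinarith
  rcases le_total s (g^2) with c1 | c1
  · -- s ≤ g² : everything active, exact identity
    rw [max_eq_left (by nlinarith : (0:ℝ) ≤ 1 - s),
        max_eq_left (by linarith : (0:ℝ) ≤ g^2 - s),
        max_eq_left (by linarith : (0:ℝ) ≤ 2*g - s),
        max_eq_left (by linarith : (0:ℝ) ≤ g - s),
        max_eq_left (by nlinarith : (0:ℝ) ≤ 1 + g^2 - s)]
    nlinarith [sq_nonneg (g - s)]
  · rcases le_total s g with c2 | c2
    · -- g² ≤ s ≤ g
      rw [max_eq_left (by linarith : (0:ℝ) ≤ 1 - s),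
          max_eq_right (by linarith : g^2 - s ≤ 0),
          max_eq_left (by linarith : (0:ℝ) ≤ 2*g - s),
          max_eq_left (by linarith : (0:ℝ) ≤ g - s),
          max_eq_left (by nlinarith : (0:ℝ) ≤ 1 + g^2 - s)]
      nlinarith [sq_nonneg (g^2 - s)]
    · rcases le_total s 1 with c3 | c3
      · rcases le_total s (2*g) with c4 | c4
        · -- g ≤ s ≤ min(1, 2g)
          rw [max_eq_left (by linarith : (0:ℝ) ≤ 1 - s),
              max_eq_right (by linarith : g^2 - s ≤ 0),
              max_eq_left (by linarith : (0:ℝ) ≤ 2*g - s),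
              max_eq_right (by linarith : g - s ≤ 0),
              max_eq_left (by nlinarith : (0:ℝ) ≤ 1 + g^2 - s)]
          have hu2 : s - g ≤ 1/2 := by linarith
          have hw : 0 ≤ (2*g - s) * (1 - s) :=
            mul_nonneg (by linarith) (by linarith)
          have h1 : 0 ≤ ((2*g - s) * (1 - s))^2 := sq_nonneg _
          have h2 : 0 ≤ (s - g) * ((2*g - s) * (1 - s)) :=
            mul_nonneg (by linarith) hw
          have h3 : 0 ≤ (s - g)^2 * ((2*g - s) * (1 - s)) :=
            mul_nonneg (sq_nonneg _) hw
          have h4 : 0 ≤ (s - g)^2 * ((s - g)^2 - 4*(s - g) + 2) :=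
            mul_nonneg (sq_nonneg _) (by nlinarith)
          nlinarith [h1, h2, h3, h4]
        · -- 2g ≤ s ≤ 1
          rw [max_eq_left (by linarith : (0:ℝ) ≤ 1 - s),
              max_eq_right (by linarith : g^2 - s ≤ 0),
              max_eq_right (by linarith : 2*g - s ≤ 0),
              max_eq_right (by linarith : g - s ≤ 0),
              max_eq_left (by nlinarith : (0:ℝ) ≤ 1 + g^2 - s)]
          nlinarith [mul_nonneg (sq_nonneg g) (by linarith : (0:ℝ) ≤ 1 - s), sq_nonneg (g^2)]
      · rcases le_total s (2*g) with c4 | c4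
        · -- 1 ≤ s ≤ 2g
          rw [max_eq_right (by linarith : 1 - s ≤ 0),
              max_eq_right (by linarith : g^2 - s ≤ 0),
              max_eq_left (by linarith : (0:ℝ) ≤ 2*g - s),
              max_eq_right (by linarith : g - s ≤ 0),
              max_eq_left (by nlinarith : (0:ℝ) ≤ 1 + g^2 - s)]
          have h1 : 0 ≤ (1+g)^2 - 2*s := by nlinarith [sq_nonneg (1 - g)]
          nlinarith [mul_nonneg (sq_nonneg (1 - g)) h1]
        · rcases le_total s (1 + g^2) with c5 | c5
          · rw [max_eq_right (by linarith : 1 - s ≤ 0),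
                max_eq_right (by linarith : g^2 - s ≤ 0),
                max_eq_right (by linarith : 2*g - s ≤ 0),
                max_eq_right (by linarith : g - s ≤ 0),
                max_eq_left (by linarith : (0:ℝ) ≤ 1 + g^2 - s)]
            nlinarith [sq_nonneg (1 + g^2 - s)]
          · rw [max_eq_right (by linarith : 1 - s ≤ 0),
                max_eq_right (by linarith : g^2 - s ≤ 0),
                max_eq_right (by linarith : 2*g - s ≤ 0),
                max_eq_right (by linarith : g - s ≤ 0),
                max_eq_right (by linarith : 1 + g^2 - s ≤ 0)]
            norm_num


lemma kernel_integrable (p : ℝ) (hp2 : 2 < p) (y a b : ℝ) :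
    IntervalIntegrable (fun s => (max (y - s) 0)^2 * s ^ (p - 3)) volume a b := by
  apply IntervalIntegrable.continuousOn_mul
  · exact intervalIntegrable_rpow' (by linarith)
  · exact (((continuous_const.sub continuous_id).max continuous_const).pow 2).continuousOn

lemma repr_integral (p : ℝ) (hp2 : 2 < p) (hp3 : p < 3) (y : ℝ) (hy0 : 0 ≤ y) (hy2 : y ≤ 2) :
    ∫ s in (0:ℝ)..2, (max (y - s) 0)^2 * s ^ (p - 3)
      = (2 / (p * (p-1) * (p-2))) * y ^ p := by
  rcases eq_or_lt_of_le hy0 with h0 | h0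
  · -- y = 0
    rw [← h0]
    have : Set.EqOn (fun s : ℝ => (max ((0:ℝ) - s) 0)^2 * s ^ (p - 3)) (fun _ => (0:ℝ))
        (Set.uIcc (0:ℝ) 2) := by
      intro s hs
      rw [Set.uIcc_of_le (by norm_num : (0:ℝ) ≤ 2)] at hs
      dsimp only
      rw [zero_sub, max_eq_right (by linarith [hs.1] : -s ≤ 0)]
      ring
    rw [integral_congr this, intervalIntegral.integral_const]
    rw [Real.zero_rpow (by intro h; rw [h] at hp2; norm_num at hp2 : p ≠ 0)]
    simp
  · -- 0 < y
    have hsplit : (∫ s in (0:ℝ)..y, (max (y - s) 0)^2 * s ^ (p - 3))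
        + (∫ s in y..2, (max (y - s) 0)^2 * s ^ (p - 3))
        = ∫ s in (0:ℝ)..2, (max (y - s) 0)^2 * s ^ (p - 3) :=
      integral_add_adjacent_intervals (kernel_integrable p hp2 y 0 y) (kernel_integrable p hp2 y y 2)
    have htail : (∫ s in y..2, (max (y - s) 0)^2 * s ^ (p - 3)) = 0 := by
      have : Set.EqOn (fun s : ℝ => (max (y - s) 0)^2 * s ^ (p - 3)) (fun _ => (0:ℝ))
          (Set.uIcc y 2) := by
        intro s hs
        rw [Set.uIcc_of_le hy2] at hs
        dsimp only
        rw [max_eq_right (by linarith [hs.1] : y - s ≤ 0)]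
        ring
      rw [integral_congr this]; simp
    have hmain : (∫ s in (0:ℝ)..y, (max (y - s) 0)^2 * s ^ (p - 3))
        = ∫ s in (0:ℝ)..y, (y^2 * s ^ (p-3) - 2*y*(s ^ (p-2)) + s ^ (p-1)) := by
      apply integral_congr
      intro s hs
      rw [Set.uIcc_of_le hy0] at hs
      dsimp only
      rcases eq_or_lt_of_le hs.1 with hs0 | hs0
      · rw [← hs0]
        rw [Real.zero_rpow (by intro h; nlinarith [h] : p - 3 ≠ 0),
            Real.zero_rpow (by intro h; nlinarith [h] : p - 2 ≠ 0),
            Real.zero_rpow (by intro h; nlinarith [h] : p - 1 ≠ 0)]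
        ring
      · rw [max_eq_left (by linarith [hs.2] : (0:ℝ) ≤ y - s)]
        have e1 : s ^ (p-2) = s ^ (p-3) * s := by
          rw [← Real.rpow_add_one (ne_of_gt hs0) (p-3), show p-3+1 = p-2 by ring]
        have e2 : s ^ (p-1) = s ^ (p-3) * s * s := by
          rw [← Real.rpow_add_one (ne_of_gt hs0) (p-3), ← Real.rpow_add_one (ne_of_gt hs0) (p-3+1),
              show p-3+1+1 = p-1 by ring]
        rw [e1, e2]; ring
    have i1 : ∫ s in (0:ℝ)..y, s ^ (p-3) = y ^ (p-2) / (p-2) := by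
      rw [integral_rpow (Or.inl (by linarith)),
          Real.zero_rpow (by intro h; nlinarith [h] : p - 3 + 1 ≠ 0),
          show p-3+1 = p-2 by ring]
      norm_num
    have i2 : ∫ s in (0:ℝ)..y, s ^ (p-2) = y ^ (p-1) / (p-1) := by
      rw [integral_rpow (Or.inl (by linarith)),
          Real.zero_rpow (by intro h; nlinarith [h] : p - 2 + 1 ≠ 0),
          show p-2+1 = p-1 by ring]
      norm_num
    have i3 : ∫ s in (0:ℝ)..y, s ^ (p-1) = y ^ p / p := by
      rw [integral_rpow (Or.inl (by linarith)),
          Real.zero_rpow (by intro h; nlinarith [h] : p - 1 + 1 ≠ 0),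
          show p-1+1 = p by ring]
      norm_num
    have hint : (∫ s in (0:ℝ)..y, (y^2 * s ^ (p-3) - 2*y*(s ^ (p-2)) + s ^ (p-1)))
        = y^2 * (y ^ (p-2) / (p-2)) - 2*y*(y ^ (p-1) / (p-1)) + y ^ p / p := by
      rw [intervalIntegral.integral_add, intervalIntegral.integral_sub,
          intervalIntegral.integral_const_mul, intervalIntegral.integral_const_mul, i1, i2, i3]
      · exact (intervalIntegrable_rpow' (by linarith)).const_mul _
      · exact (intervalIntegrable_rpow' (by linarith)).const_mul _
      · exact ((intervalIntegrable_rpow' (by linarith)).const_mul _).sub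
          ((intervalIntegrable_rpow' (by linarith)).const_mul _)
      · exact intervalIntegrable_rpow' (by linarith)
    have hyp2 : y ^ 2 * y ^ (p-2) = y ^ p := by
      rw [← Real.rpow_natCast y 2, ← Real.rpow_add h0,
          show ((2:ℕ):ℝ) + (p-2) = p by push_cast; ring]
    have hyp1 : y * y ^ (p-1) = y ^ p := by
      nth_rewrite 1 [← Real.rpow_one y]
      rw [← Real.rpow_add h0, show (1:ℝ) + (p-1) = p by ring]
    have hp1 : p - 1 ≠ 0 := by intro h; nlinarith [h]
    have hp2' : p - 2 ≠ 0 := by intro h; nlinarith [h]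
    have hp0 : p ≠ 0 := by positivity
    have a1 : y^2 * (y^(p-2)/(p-2)) = y^p/(p-2) := by rw [← hyp2]; ring
    have a2 : 2*y*(y^(p-1)/(p-1)) = 2*(y^p)/(p-1) := by rw [← hyp1]; ring
    rw [← hsplit, htail, hmain, hint, a1, a2]
    field_simp
    ring

lemma key_ineq (p : ℝ) (hp2 : 2 < p) (hp3 : p < 3) (x : ℝ) (hx0 : 0 ≤ x) (hx1 : x ≤ 1) :
    1 + x ^ p + (2:ℝ) ^ p * x ^ (p/2) ≤ (1+x) ^ p + 2 * x ^ (p/2) := by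
  set g := Real.sqrt x with hgdef
  have hg0 : 0 ≤ g := Real.sqrt_nonneg x
  have hgsq : g^2 = x := Real.sq_sqrt hx0
  have hg1 : g ≤ 1 := by nlinarith
  set C : ℝ := 2 / (p * (p-1) * (p-2)) with hCdef
  have hC : 0 < C := by
    exact div_pos (by norm_num)
      (mul_pos (mul_pos (by linarith) (by linarith)) (by linarith))
  have hmono : (∫ s in (0:ℝ)..2, ((max (1 - s) 0)^2 * s ^ (p - 3)
        + (max (x - s) 0)^2 * s ^ (p - 3) + (max (2*g - s) 0)^2 * s ^ (p - 3)))
      ≤ ∫ s in (0:ℝ)..2, ((max (1 + x - s) 0)^2 * s ^ (p - 3)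
        + 2 * ((max (g - s) 0)^2 * s ^ (p - 3))) := by
    apply integral_mono_on (by norm_num)
    · exact ((kernel_integrable p hp2 1 0 2).add (kernel_integrable p hp2 x 0 2)).add
        (kernel_integrable p hp2 (2*g) 0 2)
    · exact (kernel_integrable p hp2 (1+x) 0 2).add
        ((kernel_integrable p hp2 g 0 2).const_mul 2)
    · intro s hs
      have hker : 0 ≤ s ^ (p-3) := Real.rpow_nonneg hs.1 _
      have hJ := J_nonneg g s hg0 hg1
      rw [hgsq] at hJ
      nlinarith [mul_le_mul_of_nonneg_right hJ hker]
  have e1 : (∫ s in (0:ℝ)..2, ((max (1 - s) 0)^2 * s ^ (p - 3)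
        + (max (x - s) 0)^2 * s ^ (p - 3) + (max (2*g - s) 0)^2 * s ^ (p - 3)))
      = C * 1 ^ p + C * x ^ p + C * (2*g) ^ p := by
    rw [intervalIntegral.integral_add ((kernel_integrable p hp2 1 0 2).add
          (kernel_integrable p hp2 x 0 2)) (kernel_integrable p hp2 (2*g) 0 2),
        intervalIntegral.integral_add (kernel_integrable p hp2 1 0 2)
          (kernel_integrable p hp2 x 0 2),
        repr_integral p hp2 hp3 1 (by norm_num) (by norm_num),
        repr_integral p hp2 hp3 x hx0 (by linarith),
        repr_integral p hp2 hp3 (2*g) (by linarith) (by linarith)]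
  have e2 : (∫ s in (0:ℝ)..2, ((max (1 + x - s) 0)^2 * s ^ (p - 3)
        + 2 * ((max (g - s) 0)^2 * s ^ (p - 3))))
      = C * (1+x) ^ p + 2 * (C * g ^ p) := by
    rw [intervalIntegral.integral_add (kernel_integrable p hp2 (1+x) 0 2)
          ((kernel_integrable p hp2 g 0 2).const_mul 2),
        intervalIntegral.integral_const_mul,
        repr_integral p hp2 hp3 (1+x) (by linarith) (by linarith),
        repr_integral p hp2 hp3 g hg0 (by linarith)]
  rw [e1, e2] at hmono
  have hgp : g ^ p = x ^ (p/2) := by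
    rw [hgdef, Real.sqrt_eq_rpow, ← Real.rpow_mul hx0, show 1/2 * p = p/2 by ring]
  have h2gp : (2*g) ^ p = 2 ^ p * x ^ (p/2) := by
    rw [Real.mul_rpow (by norm_num) hg0, hgp]
  rw [Real.one_rpow, hgp, h2gp] at hmono
  have h2 : C * (1 + x ^ p + 2 ^ p * x ^ (p/2)) ≤ C * ((1+x) ^ p + 2 * x ^ (p/2)) := by
    ring_nf
    ring_nf at hmono
    linarith
  exact le_of_mul_le_mul_left h2 hC

theorem stmt_14 :
    (∀ x : ℝ, 0 ≤ x → x ≤ 1 →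
      x ^ (Real.log 6 / Real.log 2) + 4 * x ^ ((Real.log 6 / Real.log 2) / 2) + 1
        ≤ (1 + x) ^ (Real.log 6 / Real.log 2)) ∧
    (1 : ℝ) ^ (Real.log 6 / Real.log 2) + 4 * (1 : ℝ) ^ ((Real.log 6 / Real.log 2) / 2) + 1
        = (1 + 1 : ℝ) ^ (Real.log 6 / Real.log 2) := by
  have hlog2 : 0 < Real.log 2 := Real.log_pos (by norm_num)
  set p := Real.log 6 / Real.log 2 with hpdef
  have hp2 : 2 < p := by
    rw [hpdef, lt_div_iff₀ hlog2]
    calc 2 * Real.log 2 = Real.log ((2:ℝ)^(2:ℕ)) := by rw [Real.log_pow]; push_cast; ring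
    _ < Real.log 6 := Real.log_lt_log (by norm_num) (by norm_num)
  have hp3 : p < 3 := by
    rw [hpdef, div_lt_iff₀ hlog2]
    calc Real.log 6 < Real.log ((2:ℝ)^(3:ℕ)) := Real.log_lt_log (by norm_num) (by norm_num)
    _ = 3 * Real.log 2 := by rw [Real.log_pow]; push_cast; ring
  have h2p : (2:ℝ) ^ p = 6 := by
    rw [hpdef, Real.rpow_def_of_pos (by norm_num : (0:ℝ) < 2)]
    rw [mul_div_cancel₀ _ (ne_of_gt hlog2)]
    exact Real.exp_log (by norm_num)
  constructor
  · intro x hx0 hx1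
    have h := key_ineq p hp2 hp3 x hx0 hx1
    rw [h2p] at h
    linarith
  · rw [Real.one_rpow, Real.one_rpow, show (1:ℝ)+1 = 2 by norm_num, h2p]
    norm_num
end

section
/- Let p = log_2 6. The function x ↦ x^(p−1) + 2x^((p−2)/2) − 2x^(p/2) is strictly concave on (0,1). -/
/-!
Write `p = log₂ 6`. For `x > 0` the second derivative factors as
`(p - 2)/2 · x^((p-6)/2) · ((2p - 2) x^(p/2) + p - 4 - p x)`. Since `p > 2` and `0 < x < 1` we have
`x^(p/2) < x`, so the last factor is below `(p - 2) x + p - 4 < 2p - 6`, which is `≤ 0` because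
`p ≤ 3`, i.e. `6 ≤ 8`.
-/

open Real Set

noncomputable def rpowTrinomial (p x : ℝ) : ℝ :=
  x ^ (p - 1) + 2 * x ^ ((p - 2) / 2) - 2 * x ^ (p / 2)

variable {p x : ℝ}

theorem hasDerivAt_rpowTrinomial (hx : x ≠ 0) :
    HasDerivAt (rpowTrinomial p)
      ((p - 1) * x ^ (p - 2) + (p - 2) * x ^ ((p - 4) / 2) - p * x ^ ((p - 2) / 2)) x := by
  have h₁ := hasDerivAt_rpow_const (p := p - 1) (Or.inl hx)
  have h₂ := (hasDerivAt_rpow_const (p := (p - 2) / 2) (Or.inl hx)).const_mul 2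
  have h₃ := (hasDerivAt_rpow_const (p := p / 2) (Or.inl hx)).const_mul 2
  refine ((h₁.add h₂).sub h₃).congr_deriv ?_
  rw [show p - 1 - 1 = p - 2 by ring, show (p - 2) / 2 - 1 = (p - 4) / 2 by ring,
    show p / 2 - 1 = (p - 2) / 2 by ring]
  ring

theorem deriv2_rpowTrinomial (hx : 0 < x) :
    deriv^[2] (rpowTrinomial p) x =
      (p - 2) / 2 * x ^ ((p - 6) / 2) * ((2 * p - 2) * x ^ (p / 2) + p - 4 - p * x) := by
  have hderiv : deriv (rpowTrinomial p) =ᶠ[nhds x]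
      fun y ↦ (p - 1) * y ^ (p - 2) + (p - 2) * y ^ ((p - 4) / 2) - p * y ^ ((p - 2) / 2) := by
    filter_upwards [eventually_ne_nhds hx.ne'] with y hy
    exact (hasDerivAt_rpowTrinomial hy).deriv
  have h₁ := (hasDerivAt_rpow_const (p := p - 2) (Or.inl hx.ne')).const_mul (p - 1)
  have h₂ := (hasDerivAt_rpow_const (p := (p - 4) / 2) (Or.inl hx.ne')).const_mul (p - 2)
  have h₃ := (hasDerivAt_rpow_const (p := (p - 2) / 2) (Or.inl hx.ne')).const_mul p
  rw [Function.iterate_succ_apply, Function.iterate_one, hderiv.deriv_eq]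
  refine ((h₁.add h₂).sub h₃).deriv.trans ?_
  rw [show p - 2 - 1 = (p - 6) / 2 + p / 2 by ring, show (p - 4) / 2 - 1 = (p - 6) / 2 by ring,
    show (p - 2) / 2 - 1 = (p - 6) / 2 + 1 by ring, rpow_add hx, rpow_add hx, rpow_one]
  ring

theorem rpowTrinomial_factor_neg (hp₂ : 2 < p) (hp₃ : p ≤ 3) (hx₀ : 0 < x) (hx₁ : x < 1) :
    (2 * p - 2) * x ^ (p / 2) + p - 4 - p * x < 0 := by
  have hpow : x ^ (p / 2) < x := by
    simpa using rpow_lt_rpow_of_exponent_gt hx₀ hx₁ (by linarith : (1 : ℝ) < p / 2)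
  nlinarith

theorem strictConcaveOn_rpowTrinomial (hp₂ : 2 < p) (hp₃ : p ≤ 3) :
    StrictConcaveOn ℝ (Ioo 0 1) (rpowTrinomial p) := by
  refine strictConcaveOn_of_deriv2_neg' (convex_Ioo 0 1) ?_ fun x ⟨hx₀, hx₁⟩ ↦ ?_
  · intro x hx
    have hx₀ : x ≠ 0 := hx.1.ne'
    unfold rpowTrinomial
    fun_prop (disch := simp [hx₀])
  · rw [deriv2_rpowTrinomial hx₀]
    exact mul_neg_of_pos_of_neg (by positivity) (rpowTrinomial_factor_neg hp₂ hp₃ hx₀ hx₁)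

theorem two_lt_logb_two_six : 2 < logb 2 6 := by
  rw [lt_logb_iff_rpow_lt one_lt_two (by norm_num)]
  norm_num

theorem logb_two_six_le_three : logb 2 6 ≤ 3 := by
  rw [logb_le_iff_le_rpow one_lt_two (by norm_num)]
  norm_num

theorem stmt_15 :
    StrictConcaveOn ℝ (Set.Ioo (0 : ℝ) 1)
      (fun x : ℝ => x ^ (Real.log 6 / Real.log 2 - 1)
        + 2 * x ^ ((Real.log 6 / Real.log 2 - 2) / 2)
        - 2 * x ^ ((Real.log 6 / Real.log 2) / 2)) :=
  strictConcaveOn_rpowTrinomial two_lt_logb_two_six logb_two_six_le_three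
end

section
/- Let n ≥ 0 and A ⊆ {0,1}ⁿ ⊆ ℤⁿ. Then the additive energy E(A) = |{(a₁,a₂,a₃,a₄) ∈ A⁴ : a₁+a₂ = a₃+a₄}| satisfies E(A) ≤ |A|^(log_2 6). -/
/-!
Split `A` along a coordinate on which it is not constant into `A₀` and `A₁`. Comparing that
coordinate of `a₁ + a₂ = a₃ + a₄` shows `E(A) = E(A₀) + E(A₁) + 4 E(A₀, A₁)`, and Cauchy–Schwarz
on difference counts gives `E(A₀, A₁)² ≤ E(A₀) E(A₁)`. By induction it then suffices that
`x ^ c + y ^ c + 4 √(x ^ c y ^ c) ≤ (x + y) ^ c` for `c = log₂ 6`. Putting `v = √(x / y)` this is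
`v ^ c + v⁻¹ ^ c + (2 ^ c - 2) ≤ (v + v⁻¹) ^ c`, an equality at `v = 1`; for every `c ≥ 2` the
difference of the two sides is monotone on `[1, ∞)`, because after the substitution `t = v⁻²` its
derivative is nonnegative exactly when `1 - t ^ c ≤ (1 - t) (1 + t) ^ (c - 1)`, which follows from
the bound `1 + d (1 - x⁻¹) ≤ x ^ d` applied to `x = t` and `x = 1 + t` with `d = c - 2`.
-/

/-- The embedding of the cube `{0,1}ⁿ` into `ℤⁿ`. -/
def cubeToZ {n : ℕ} (x : Fin n → Bool) : Fin n → ℤ := fun i => if x i then 1 else 0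

/-- The additive energy of a subset of the cube `{0,1}ⁿ ⊆ ℤⁿ`: the number of quadruples
`(a₁,a₂,a₃,a₄) ∈ A⁴` with `a₁ + a₂ = a₃ + a₄` in `ℤⁿ`. -/
def cubeEnergy {n : ℕ} (A : Finset (Fin n → Bool)) : ℕ :=
  ((A ×ˢ A ×ˢ A ×ˢ A).filter
    (fun q => cubeToZ q.1 + cubeToZ q.2.1 = cubeToZ q.2.2.1 + cubeToZ q.2.2.2)).card

open Real

lemma one_add_mul_one_sub_inv_le_rpow {x d : ℝ} (hx : 0 < x) (hd : 0 ≤ d) :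
    1 + d * (1 - x⁻¹) ≤ x ^ d := by
  rw [rpow_def_of_pos hx]
  nlinarith [add_one_le_exp (log x * d), one_sub_inv_le_log_of_pos hx]

lemma one_sub_rpow_le_one_sub_mul_one_add_rpow {t c : ℝ} (ht₀ : 0 < t) (ht₁ : t ≤ 1) (hc : 2 ≤ c) :
    1 - t ^ c ≤ (1 - t) * (1 + t) ^ (c - 1) := by
  obtain ⟨d, hd, rfl⟩ : ∃ d, 0 ≤ d ∧ c = 2 + d := ⟨c - 2, by linarith, by ring⟩
  have ht' : 0 < 1 + t := by linarith
  have h₁ := mul_le_mul_of_nonneg_left (one_add_mul_one_sub_inv_le_rpow ht' hd)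
    (by nlinarith : 0 ≤ (1 - t) * (1 + t))
  have h₂ := mul_le_mul_of_nonneg_left (one_add_mul_one_sub_inv_le_rpow ht₀ hd) (sq_nonneg t)
  -- the lower bounds for `(1 + t) ^ d` and `t ^ d` are exactly complementary
  have key : (1 - t) * (1 + t) * (1 + d * (1 - (1 + t)⁻¹)) + t ^ 2 * (1 + d * (1 - t⁻¹)) = 1 := by
    field_simp; ring
  rw [rpow_add ht₀, rpow_two, show 2 + d - 1 = 1 + d by ring, rpow_one_add' ht'.le (by linarith)]
  nlinarith

lemma monotoneOn_rpow_add_inv_sub {c : ℝ} (hc : 2 ≤ c) :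
    MonotoneOn (fun v : ℝ => (v + v⁻¹) ^ c - v ^ c - v⁻¹ ^ c) (Set.Ici 1) := by
  have hderiv : ∀ v : ℝ, 0 < v → HasDerivAt (fun v : ℝ => (v + v⁻¹) ^ c - v ^ c - v⁻¹ ^ c)
      (c * ((1 - (v ^ 2)⁻¹) * (v + v⁻¹) ^ (c - 1) - v ^ (c - 1) + (v ^ 2)⁻¹ * v⁻¹ ^ (c - 1))) v :=
    fun v hv =>
    ((((hasDerivAt_id v).add (hasDerivAt_inv hv.ne')).rpow_const
      (Or.inl (by positivity : v + v⁻¹ ≠ 0))).sub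
      ((hasDerivAt_id v).rpow_const (Or.inl hv.ne'))).sub
      ((hasDerivAt_inv hv.ne').rpow_const (Or.inl (by positivity)))
      |>.congr_deriv (by simp only [Pi.add_apply, id]; ring)
  refine monotoneOn_of_hasDerivWithinAt_nonneg (convex_Ici 1)
    (fun v hv => (hderiv v (by simp at hv; linarith)).continuousAt.continuousWithinAt)
    (fun v hv => (hderiv v ?_).hasDerivWithinAt) fun v hv => ?_
  all_goals rw [interior_Ici, Set.mem_Ioi] at hv
  · linarith
  have hv₀ : 0 < v := by linarith
  have ht : (v ^ 2)⁻¹ = v ^ (-2 : ℝ) := by rw [rpow_neg hv₀.le, rpow_two]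
  have ht₀ : 0 < v ^ (-2 : ℝ) := by positivity
  have ht₁ : v ^ (-2 : ℝ) ≤ 1 := rpow_le_one_of_one_le_of_nonpos hv.le (by norm_num)
  have e₁ : (v + v⁻¹) ^ (c - 1) = v ^ (c - 1) * (1 + v ^ (-2 : ℝ)) ^ (c - 1) := by
    rw [← mul_rpow hv₀.le (by positivity), ← ht]; congr 1; field_simp
  have e₂ : v ^ (-2 : ℝ) * v⁻¹ ^ (c - 1) = v ^ (c - 1) * (v ^ (-2 : ℝ)) ^ c := by
    rw [inv_rpow hv₀.le, ← rpow_neg hv₀.le, ← rpow_mul hv₀.le, ← rpow_add hv₀, ← rpow_add hv₀]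
    ring_nf
  have key := one_sub_rpow_le_one_sub_mul_one_add_rpow ht₀ ht₁ hc
  -- with `t = v ^ (-2)` the derivative is `c v ^ (c - 1) ((1 - t) (1 + t) ^ (c - 1) - 1 + t ^ c)`
  rw [ht]
  calc (0:ℝ) ≤ c * v ^ (c - 1) * ((1 - v ^ (-2 : ℝ)) * (1 + v ^ (-2 : ℝ)) ^ (c - 1) - 1
        + (v ^ (-2 : ℝ)) ^ c) := mul_nonneg (by positivity) (by linarith)
    _ = _ := by rw [e₁]; linear_combination (-c) * e₂

lemma rpow_add_inv_rpow_add_le {c v : ℝ} (hc : 2 ≤ c) (hv : 1 ≤ v) :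
    v ^ c + v⁻¹ ^ c + (2 ^ c - 2) ≤ (v + v⁻¹) ^ c := by
  have h := monotoneOn_rpow_add_inv_sub hc Set.self_mem_Ici hv hv
  norm_num at h
  linarith

lemma rpow_add_rpow_add_mul_sqrt_le_of_le {c x y : ℝ} (hc : 2 ≤ c) (hy : 0 ≤ y) (hyx : y ≤ x) :
    x ^ c + y ^ c + (2 ^ c - 2) * √(x ^ c * y ^ c) ≤ (x + y) ^ c := by
  rcases hy.eq_or_lt with rfl | hy₀
  · simp [zero_rpow (by positivity : c ≠ 0)]
  have hx₀ : 0 < x := hy₀.trans_le hyx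
  set v := √x / √y
  set m := √x * √y
  have hv : 1 ≤ v := (one_le_div (by positivity)).2 (sqrt_le_sqrt hyx)
  have hm : 0 < m := by positivity
  have hvx : v * m = x := by simp only [v, m]; field_simp; exact sq_sqrt hx₀.le
  have hvy : v⁻¹ * m = y := by simp only [v, m]; field_simp; exact sq_sqrt hy₀.le
  have hsqrt : √(x ^ c * y ^ c) = m ^ c := by
    rw [← mul_rpow hx₀.le hy, sqrt_eq_rpow, ← rpow_mul (by positivity), mul_comm c,
      rpow_mul (by positivity), ← sqrt_eq_rpow, sqrt_mul hx₀.le]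
  calc x ^ c + y ^ c + (2 ^ c - 2) * √(x ^ c * y ^ c)
      = (v ^ c + v⁻¹ ^ c + (2 ^ c - 2)) * m ^ c := by
        rw [hsqrt, ← hvx, ← hvy, mul_rpow (by positivity) hm.le, mul_rpow (by positivity) hm.le]
        ring
    _ ≤ (v + v⁻¹) ^ c * m ^ c := by gcongr; exact rpow_add_inv_rpow_add_le hc hv
    _ = (x + y) ^ c := by rw [← mul_rpow (by positivity) hm.le, add_mul, hvx, hvy]

lemma rpow_add_rpow_add_mul_sqrt_le {c x y : ℝ} (hc : 2 ≤ c) (hx : 0 ≤ x) (hy : 0 ≤ y) :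
    x ^ c + y ^ c + (2 ^ c - 2) * √(x ^ c * y ^ c) ≤ (x + y) ^ c := by
  rcases le_total y x with hyx | hxy
  · exact rpow_add_rpow_add_mul_sqrt_le_of_le hc hy hyx
  · rw [add_comm (x ^ c), mul_comm (x ^ c), add_comm x]
    exact rpow_add_rpow_add_mul_sqrt_le_of_le hc hx hxy

open Finset
open scoped Combinatorics.Additive Pointwise

namespace Finset

variable {G : Type*} [AddCommGroup G] [DecidableEq G]

def sumRep (s t : Finset G) (a : G) : ℕ := #{xy ∈ s ×ˢ t | xy.1 + xy.2 = a}

def diffRep (s : Finset G) (d : G) : ℕ := #{xy ∈ s ×ˢ s | xy.1 - xy.2 = d}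

lemma addEnergy_eq_sum_sumRep_sq {s t U : Finset G} (hU : s + t ⊆ U) :
    E[s, t] = ∑ a ∈ U, sumRep s t a ^ 2 := by
  rw [addEnergy_eq_sum_sq']
  refine sum_subset hU fun a _ ha => ?_
  rw [sq_eq_zero_iff, card_eq_zero, filter_eq_empty_iff]
  rintro ⟨x, y⟩ hxy rfl
  exact ha (add_mem_add (mem_product.1 hxy).1 (mem_product.1 hxy).2)

lemma sumRep_comm (s t : Finset G) (a : G) : sumRep s t a = sumRep t s a :=
  card_equiv (Equiv.prodComm _ _) (by simp [add_comm, and_comm])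

lemma sumRep_union_left {s s' : Finset G} (h : Disjoint s s') (t : Finset G) (a : G) :
    sumRep (s ∪ s') t a = sumRep s t a + sumRep s' t a := by
  rw [sumRep, union_product, filter_union,
    card_union_of_disjoint (disjoint_filter_filter (disjoint_product.2 (Or.inl h)))]
  rfl

lemma sumRep_union_right (s : Finset G) {t t' : Finset G} (h : Disjoint t t') (a : G) :
    sumRep s (t ∪ t') a = sumRep s t a + sumRep s t' a := by
  simp only [sumRep_comm s, sumRep_union_left h]

lemma sumRep_eq_zero_of_map_ne {H : Type*} [AddZeroClass H] (φ : G →+ H) {s t : Finset G} {i j : H}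
    (hs : ∀ x ∈ s, φ x = i) (ht : ∀ y ∈ t, φ y = j) {a : G} (ha : φ a ≠ i + j) :
    sumRep s t a = 0 := by
  rw [sumRep, card_eq_zero, filter_eq_empty_iff]
  rintro ⟨x, y⟩ hxy rfl
  rw [mem_product] at hxy
  exact ha (by rw [map_add, hs x hxy.1, ht y hxy.2])

lemma addEnergy_eq_sum_diffRep_mul {s U : Finset G} (hU : s - s ⊆ U) (t : Finset G) :
    E[s, t] = ∑ d ∈ U, diffRep s d * diffRep t d := by
  rw [addEnergy, card_eq_sum_card_fiberwise (f := fun x => x.1.1 - x.1.2) (t := U)]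
  · refine sum_congr rfl fun d _ => ?_
    have hswap : #{xy ∈ t ×ˢ t | xy.2 - xy.1 = d} = diffRep t d :=
      card_equiv (Equiv.prodComm _ _) (by simp [and_comm])
    rw [diffRep, ← hswap, ← card_product, filter_filter]
    congr 1
    ext ⟨⟨a₁, a₂⟩, b₁, b₂⟩
    simp only [mem_filter, mem_product]
    constructor
    · rintro ⟨h, hsum, rfl⟩
      exact ⟨⟨h.1, rfl⟩, h.2, sub_eq_sub_iff_add_eq_add.2 ((add_comm _ _).trans hsum.symm)⟩
    · rintro ⟨⟨ha, rfl⟩, hb, hd⟩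
      exact ⟨⟨ha, hb⟩, (sub_eq_sub_iff_add_eq_add.1 hd).symm.trans (add_comm _ _), rfl⟩
  · intro x hx
    simp only [coe_filter, Set.mem_ofPred_eq, mem_product] at hx
    exact mem_coe.2 (hU (sub_mem_sub hx.1.1.1 hx.1.1.2))

lemma addEnergy_sq_le_mul (s t : Finset G) : E[s, t] ^ 2 ≤ E[s] * E[t] := by
  rw [addEnergy_eq_sum_diffRep_mul (subset_union_left (s₂ := t - t)),
    addEnergy_eq_sum_diffRep_mul (subset_union_left (s₂ := t - t)),
    addEnergy_eq_sum_diffRep_mul (subset_union_right (s₁ := s - s))]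
  simpa only [sq] using sum_mul_sq_le_sq_mul_sq _ (diffRep s) (diffRep t)

lemma addEnergy_eq_of_forall_eq_zero_or_eq_one (φ : G →+ ℤ) {S : Finset G}
    (hS : ∀ x ∈ S, φ x = 0 ∨ φ x = 1) :
    E[S] = E[{x ∈ S | φ x = 0}] + E[{x ∈ S | φ x = 1}]
      + 4 * E[{x ∈ S | φ x = 0}, {x ∈ S | φ x = 1}] := by
  set S₀ := {x ∈ S | φ x = 0}
  set S₁ := {x ∈ S | φ x = 1}
  have hS₀ : ∀ x ∈ S₀, φ x = 0 := fun x hx => (mem_filter.1 hx).2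
  have hS₁ : ∀ x ∈ S₁, φ x = 1 := fun x hx => (mem_filter.1 hx).2
  have hunion : S₀ ∪ S₁ = S := by
    ext x; simp only [S₀, S₁, mem_union, mem_filter]; grind
  have hdisj : Disjoint S₀ S₁ := disjoint_filter.2 fun x _ h₀ h₁ => by simp [h₀] at h₁
  have hrep : ∀ a, sumRep S S a ^ 2
      = sumRep S₀ S₀ a ^ 2 + sumRep S₁ S₁ a ^ 2 + 4 * sumRep S₀ S₁ a ^ 2 := by
    intro a
    have hsplit : sumRep S S a = sumRep S₀ S₀ a + sumRep S₁ S₁ a + 2 * sumRep S₀ S₁ a := by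
      rw [← hunion, sumRep_union_left hdisj, sumRep_union_right _ hdisj,
        sumRep_union_right _ hdisj, sumRep_comm S₁ S₀]
      ring
    have h₀₀ : φ a ≠ 0 + 0 → sumRep S₀ S₀ a = 0 := sumRep_eq_zero_of_map_ne φ hS₀ hS₀
    have h₁₁ : φ a ≠ 1 + 1 → sumRep S₁ S₁ a = 0 := sumRep_eq_zero_of_map_ne φ hS₁ hS₁
    have h₀₁ : φ a ≠ 0 + 1 → sumRep S₀ S₁ a = 0 := sumRep_eq_zero_of_map_ne φ hS₀ hS₁
    rw [hsplit]
    by_cases ha₀ : φ a = 0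
    · rw [h₁₁ (by omega), h₀₁ (by omega)]; ring
    by_cases ha₁ : φ a = 1
    · rw [h₀₀ (by omega), h₁₁ (by omega)]; ring
    · rw [h₀₀ (by omega), h₀₁ (by omega)]; ring
  have hU₀ : S₀ ⊆ S := filter_subset _ _
  have hU₁ : S₁ ⊆ S := filter_subset _ _
  rw [addEnergy_eq_sum_sumRep_sq subset_rfl, addEnergy_eq_sum_sumRep_sq (add_subset_add hU₀ hU₀),
    addEnergy_eq_sum_sumRep_sq (add_subset_add hU₁ hU₁),
    addEnergy_eq_sum_sumRep_sq (add_subset_add hU₀ hU₁), mul_sum, ← sum_add_distrib,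
    ← sum_add_distrib]
  exact sum_congr rfl fun a _ => hrep a

lemma addEnergy_le_card_rpow_of_card_le_one {S : Finset G} (hS : #S ≤ 1) (c : ℝ) :
    (E[S] : ℝ) ≤ (#S : ℝ) ^ c := by
  obtain h | h := Nat.le_one_iff_eq_zero_or_eq_one.1 hS
  · simpa [card_eq_zero.1 h] using Real.rpow_nonneg le_rfl c
  · obtain ⟨a, rfl⟩ := card_eq_one.1 h
    simp [addEnergy, filter_singleton]

end Finset

lemma cubeToZ_injective (n : ℕ) : Function.Injective (cubeToZ (n := n)) := fun x y h => by
  funext i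
  have := congrFun h i
  simp only [cubeToZ] at this
  revert this
  cases x i <;> cases y i <;> simp

lemma cubeEnergy_eq_addEnergy {n : ℕ} (A : Finset (Fin n → Bool)) :
    cubeEnergy A = E[A.image cubeToZ] := by
  refine card_nbij (fun q => ((cubeToZ q.1, cubeToZ q.2.2.1), cubeToZ q.2.1, cubeToZ q.2.2.2))
    ?_ ?_ ?_
  · rintro ⟨a₁, b₁, a₂, b₂⟩ hq
    simp only [coe_filter, mem_product, mem_image, Set.mem_ofPred_eq] at hq ⊢
    obtain ⟨⟨ha₁, hb₁, ha₂, hb₂⟩, h⟩ := hq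
    exact ⟨⟨⟨⟨a₁, ha₁, rfl⟩, a₂, ha₂, rfl⟩, ⟨b₁, hb₁, rfl⟩, b₂, hb₂, rfl⟩, h⟩
  · intro q _ q' _ h
    simp only [Prod.mk.injEq, (cubeToZ_injective n).eq_iff] at h
    exact Prod.ext h.1.1 (Prod.ext h.2.1 (Prod.ext h.1.2 h.2.2))
  · rintro ⟨⟨_, _⟩, _, _⟩ h
    simp only [coe_filter, mem_product, mem_image, Set.mem_ofPred_eq] at h
    obtain ⟨⟨⟨⟨a₁, ha₁, rfl⟩, a₂, ha₂, rfl⟩, ⟨b₁, hb₁, rfl⟩, b₂, hb₂, rfl⟩, h⟩ := h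
    exact ⟨(a₁, b₁, a₂, b₂), by simp [ha₁, ha₂, hb₁, hb₂, h]⟩

theorem addEnergy_le_card_rpow_of_forall_eq_zero_or_eq_one {ι : Type*} [DecidableEq (ι → ℤ)]
    {c : ℝ} (hc : 6 ≤ (2 : ℝ) ^ c) (S : Finset (ι → ℤ)) (hS : ∀ x ∈ S, ∀ i, x i = 0 ∨ x i = 1) :
    (E[S] : ℝ) ≤ (#S : ℝ) ^ c := by
  have hc₂ : 2 ≤ c := by
    by_contra! h
    linarith [rpow_lt_rpow_of_exponent_lt one_lt_two h, show (2 : ℝ) ^ (2 : ℝ) = 4 by norm_num]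
  induction S using Finset.strongInduction with | H S ih => ?_
  obtain hS₁ | ⟨x, hx, y, hy, hxy⟩ := le_or_gt #S 1 |>.imp_right one_lt_card.1
  · exact addEnergy_le_card_rpow_of_card_le_one hS₁ c
  obtain ⟨i, hi⟩ := Function.ne_iff.1 hxy
  set φ := Pi.evalAddMonoidHom (fun _ : ι => ℤ) i
  have hφ : ∀ z ∈ S, φ z = 0 ∨ φ z = 1 := fun z hz => hS z hz i
  set S₀ := {z ∈ S | φ z = 0}
  set S₁ := {z ∈ S | φ z = 1}
  have ih₀ := ih S₀ (filter_ssubset.2 <| by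
    by_contra! h; exact hi ((h x hx).trans (h y hy).symm)) fun z hz => hS z (filter_subset _ _ hz)
  have ih₁ := ih S₁ (filter_ssubset.2 <| by
    by_contra! h; exact hi ((h x hx).trans (h y hy).symm)) fun z hz => hS z (filter_subset _ _ hz)
  have hcard : #S = #S₀ + #S₁ := by
    rw [← card_filter_add_card_filter_not (s := S) (fun z => φ z = 0)]
    congr 2
    exact filter_congr fun z hz => by rcases hφ z hz with h | h <;> simp [h]
  have hmixed : (E[S₀, S₁] : ℝ) ≤ √((#S₀ : ℝ) ^ c * (#S₁ : ℝ) ^ c) := by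
    refine le_sqrt_of_sq_le ?_
    calc (E[S₀, S₁] : ℝ) ^ 2 ≤ E[S₀] * E[S₁] := by exact_mod_cast addEnergy_sq_le_mul S₀ S₁
      _ ≤ _ := mul_le_mul ih₀ ih₁ (by positivity) (by positivity)
  calc (E[S] : ℝ) = E[S₀] + E[S₁] + 4 * E[S₀, S₁] := by
        exact_mod_cast addEnergy_eq_of_forall_eq_zero_or_eq_one φ hφ
    _ ≤ (#S₀ : ℝ) ^ c + (#S₁ : ℝ) ^ c + (2 ^ c - 2) * √((#S₀ : ℝ) ^ c * (#S₁ : ℝ) ^ c) := by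
        gcongr <;> linarith
    _ ≤ (#S : ℝ) ^ c := by
        rw [hcard, Nat.cast_add]
        exact rpow_add_rpow_add_mul_sqrt_le hc₂ (by positivity) (by positivity)

theorem stmt_16 (n : ℕ) (A : Finset (Fin n → Bool)) :
    (cubeEnergy A : ℝ) ≤ (A.card : ℝ) ^ (Real.log 6 / Real.log 2) := by
  have hc : (6 : ℝ) ≤ 2 ^ (Real.log 6 / Real.log 2) := by
    rw [← logb, rpow_logb] <;> norm_num
  rw [cubeEnergy_eq_addEnergy, ← Finset.card_image_of_injective A (cubeToZ_injective n)]
  refine addEnergy_le_card_rpow_of_forall_eq_zero_or_eq_one hc _ ?_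
  simp only [mem_image, forall_exists_index, and_imp, forall_apply_eq_imp_iff₂, cubeToZ]
  intro a _ i
  split <;> simp
end

section
/- For A = {0,1}ⁿ ⊆ ℤⁿ, the additive energy satisfies E(A) = 6ⁿ = |A|^(log_2 6); hence the exponent log_2 6 in the bound E(A) ≤ |A|^(log_2 6) cannot be replaced by any smaller number. -/
def Q4 : Bool × Bool × Bool × Bool → Prop :=
  fun b => ((if b.1 then (1:ℤ) else 0) + (if b.2.1 then 1 else 0)
    = (if b.2.2.1 then 1 else 0) + (if b.2.2.2 then 1 else 0))

instance : DecidablePred Q4 := fun b => by unfold Q4; infer_instance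

lemma cardQ4 : Fintype.card {b // Q4 b} = 6 := by decide

def quadEquiv (n : ℕ) :
    ((Fin n → Bool) × (Fin n → Bool) × (Fin n → Bool) × (Fin n → Bool)) ≃
      (Fin n → Bool × Bool × Bool × Bool) where
  toFun q i := (q.1 i, q.2.1 i, q.2.2.1 i, q.2.2.2 i)
  invFun f := (fun i => (f i).1, fun i => (f i).2.1, fun i => (f i).2.2.1,
    fun i => (f i).2.2.2)
  left_inv _ := rfl
  right_inv _ := rfl

lemma energy_univ (n : ℕ) :
    cubeEnergy (Finset.univ : Finset (Fin n → Bool)) = 6 ^ n := by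
  classical
  have h1 : cubeEnergy (Finset.univ : Finset (Fin n → Bool)) =
      Fintype.card {q : (Fin n → Bool) × (Fin n → Bool) × (Fin n → Bool) × (Fin n → Bool) //
        cubeToZ q.1 + cubeToZ q.2.1 = cubeToZ q.2.2.1 + cubeToZ q.2.2.2} := by
    rw [Fintype.card_subtype, cubeEnergy]
    rw [Finset.univ_product_univ, Finset.univ_product_univ, Finset.univ_product_univ]
  rw [h1]
  have e : {q : (Fin n → Bool) × (Fin n → Bool) × (Fin n → Bool) × (Fin n → Bool) //
        cubeToZ q.1 + cubeToZ q.2.1 = cubeToZ q.2.2.1 + cubeToZ q.2.2.2} ≃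
      {f : Fin n → Bool × Bool × Bool × Bool // ∀ i, Q4 (f i)} :=
    Equiv.subtypeEquiv (quadEquiv n) (fun q => by
      rw [funext_iff]; exact Iff.rfl)
  rw [Fintype.card_congr e, Fintype.card_congr (Equiv.subtypePiEquivPi)]
  simp [Fintype.card_pi, cardQ4]

lemma two_rpow : (2:ℝ) ^ (Real.log 6 / Real.log 2) = 6 := by
  have := Real.rpow_logb (b := 2) (x := 6) two_pos (by norm_num) (by norm_num)
  rwa [Real.logb] at this

lemma pow_eq (n : ℕ) : ((6 ^ n : ℕ) : ℝ) =
    ((Finset.univ : Finset (Fin n → Bool)).card : ℝ) ^ (Real.log 6 / Real.log 2) := by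
  have hc : ((Finset.univ : Finset (Fin n → Bool)).card : ℝ) = (2:ℝ) ^ (n:ℕ) := by
    simp [Finset.card_univ]
  rw [hc, ← Real.rpow_natCast (2:ℝ) n, ← Real.rpow_mul (by norm_num),
    mul_comm, Real.rpow_mul (by norm_num), two_rpow]
  push_cast
  rw [Real.rpow_natCast]

theorem stmt_17 :
    (∀ n : ℕ, cubeEnergy (Finset.univ : Finset (Fin n → Bool)) = 6 ^ n) ∧
    (∀ n : ℕ, ((6 ^ n : ℕ) : ℝ) =
      ((Finset.univ : Finset (Fin n → Bool)).card : ℝ) ^ (Real.log 6 / Real.log 2)) ∧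
    (∀ q : ℝ, q < Real.log 6 / Real.log 2 →
      ∃ (n : ℕ) (A : Finset (Fin n → Bool)),
        (A.card : ℝ) ^ q < (cubeEnergy A : ℝ)) := by
  refine ⟨energy_univ, pow_eq, fun q hq => ?_⟩
  refine ⟨1, Finset.univ, ?_⟩
  have hcard : ((Finset.univ : Finset (Fin 1 → Bool)).card : ℝ) = 2 := by
    simp [Finset.card_univ]
  have hE : (cubeEnergy (Finset.univ : Finset (Fin 1 → Bool)) : ℝ) = 6 := by
    rw [energy_univ]; norm_num
  rw [hcard, hE, ← two_rpow]
  exact (Real.rpow_lt_rpow_left_iff one_lt_two).mpr hq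
end
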